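/- arXiv:1509.09314 — 4 statements merged into one kernel-verified Lean document; each statement's English description precedes it below -/
import Mathlib

section
/- Let a and b be geodesics in a CAT(0) space X with a(0) = b(0) = z, such that the concatenation of (the reversal of) a and b is itself a geodesic. If a is A-contracting and b is B-contracting, then the concatenated geodesic is (A+B)-contracting. -/
open Metric Set Filter Topology

variable {X : Type*} [MetricSpace X]

/-- A metric space is CAT(0) if midpoints exist and satisfy the CN comparison inequality. -/
def IsCAT0 (X : Type*) [MetricSpace X] : Prop :=
  ∀ x y : X, ∃ m : X, dist x m = dist x y / 2 ∧ dist y m = dist x y / 2 ∧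
    ∀ z : X, dist z m ^ 2 ≤ (dist z x ^ 2 + dist z y ^ 2) / 2 - dist x y ^ 2 / 4

/-- A geodesic ray: isometric embedding of `[0, ∞)`. -/
def IsRay (c : ℝ → X) : Prop :=
  ∀ s t : ℝ, 0 ≤ s → 0 ≤ t → dist (c s) (c t) = |s - t|

/-- A bi-infinite geodesic: isometric embedding of `ℝ`. -/
def IsGeodesicLine (c : ℝ → X) : Prop :=
  ∀ s t : ℝ, dist (c s) (c t) = |s - t|

/-- A geodesic segment from `y` to `z`, parametrized on `[0, dist y z]`. -/
def IsGeodesicSeg (g : ℝ → X) (y z : X) : Prop :=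
  g 0 = y ∧ g (dist y z) = z ∧
    ∀ s t, s ∈ Icc 0 (dist y z) → t ∈ Icc 0 (dist y z) → dist (g s) (g t) = |s - t|

/-- `π` is a nearest-point projection onto the set `S`. -/
def IsProjOn (S : Set X) (π : X → X) : Prop :=
  ∀ p : X, π p ∈ S ∧ ∀ q ∈ S, dist p (π p) ≤ dist p q

/-- The set `S` (image of a geodesic) is `A`-contracting. -/
def ContractingSet (A : ℝ) (S : Set X) : Prop :=
  ∃ π : X → X, IsProjOn S π ∧
    ∀ p q : X, dist p q < dist p (π p) → dist (π p) (π q) < A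

/-- Slimness with respect to a given nearest-point projection `π` onto `S`:
every geodesic from `y` to a point `z ∈ S` passes within `δ` of `π y`. -/
def SlimWith (δ : ℝ) (S : Set X) (π : X → X) : Prop :=
  ∀ y z, z ∈ S → ∀ g : ℝ → X, IsGeodesicSeg g y z →
    ∃ s ∈ Icc (0:ℝ) (dist y z), dist (π y) (g s) ≤ δ

/-- The set `S` is `δ`-slim. -/
def SlimSet (δ : ℝ) (S : Set X) : Prop :=
  ∃ π : X → X, IsProjOn S π ∧ SlimWith δ S π

/-- Two rays are asymptotic (bounded Hausdorff distance). -/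
def Asymp (a b : ℝ → X) : Prop :=
  ∃ M : ℝ, ∀ t : ℝ, 0 ≤ t → dist (a t) (b t) ≤ M

/-- Uniqueness of midpoints in a CAT(0) space. -/
lemma myMidUnique (hX : IsCAT0 X) {p q m m' : X}
    (h1 : dist p m = dist p q / 2) (h2 : dist q m = dist p q / 2)
    (h1' : dist p m' = dist p q / 2) (h2' : dist q m' = dist p q / 2) : m = m' := by
  obtain ⟨m0, hm1, hm2, hCN⟩ := hX p q
  have key : ∀ w : X, dist p w = dist p q / 2 → dist q w = dist p q / 2 → w = m0 := by
    intro w hw1 hw2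
    have := hCN w
    rw [dist_comm w p, dist_comm w q, hw1, hw2] at this
    have : dist w m0 ^ 2 ≤ 0 := by nlinarith [this]
    have h0 : dist w m0 = 0 := by nlinarith [dist_nonneg (x := w) (y := m0)]
    exact dist_eq_zero.mp h0
  rw [key m h1 h2, key m' h1' h2']

/-- Dyadic convexity estimate along a geodesic in a CAT(0) space. -/
lemma myDyadic (hX : IsCAT0 X) (x : X) (g : ℝ → X) (L : ℝ)
    (hg : ∀ u v : ℝ, u ∈ Icc (0:ℝ) 1 → v ∈ Icc (0:ℝ) 1 → dist (g u) (g v) = |u - v| * L) :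
    ∀ n j : ℕ, j ≤ 2 ^ n →
      dist x (g ((j : ℝ) / 2 ^ n)) ^ 2 ≤
        (1 - (j : ℝ) / 2 ^ n) * dist x (g 0) ^ 2 + ((j : ℝ) / 2 ^ n) * dist x (g 1) ^ 2
          - ((j : ℝ) / 2 ^ n) * (1 - (j : ℝ) / 2 ^ n) * L ^ 2 := by
  have hL : 0 ≤ L := by
    have := hg 0 1 (by norm_num) (by norm_num)
    have h0 : (0:ℝ) ≤ dist (g 0) (g 1) := dist_nonneg
    rw [this] at h0; simpa using h0
  intro n
  induction n with
  | zero =>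
    intro j hj
    interval_cases j
    · norm_num
    · norm_num
  | succ n IH =>
    intro j hj
    have hE : (0:ℝ) < 2 ^ n := by positivity
    rcases Nat.even_or_odd j with ⟨k, hk⟩ | ⟨k, hk⟩
    · -- even case: j = 2k
      subst hk
      have hk2 : k ≤ 2 ^ n := by omega
      have hcast : ((k + k : ℕ) : ℝ) / 2 ^ (n+1) = (k : ℝ) / 2 ^ n := by
        push_cast; field_simp; ring
      rw [hcast]
      exact IH k hk2
    · -- odd case: j = 2k+1
      subst hk
      have hk1 : k + 1 ≤ 2 ^ n := by omega
      have hk0 : k ≤ 2 ^ n := by omega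
      set l1 : ℝ := (k : ℝ) / 2 ^ n with hl1
      set l2 : ℝ := ((k : ℝ) + 1) / 2 ^ n with hl2
      have hcast : ((2 * k + 1 : ℕ) : ℝ) / 2 ^ (n+1) = (l1 + l2) / 2 := by
        push_cast
        rw [pow_succ]
        ring
      have hl1mem : l1 ∈ Icc (0:ℝ) 1 := by
        constructor
        · positivity
        · rw [div_le_one hE]; exact_mod_cast Nat.le_of_lt_succ (by omega)
      have hl2mem : l2 ∈ Icc (0:ℝ) 1 := by
        constructor
        · positivity
        · rw [div_le_one hE]; exact_mod_cast hk1
      have hmmem : (l1 + l2) / 2 ∈ Icc (0:ℝ) 1 := by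
        constructor
        · linarith [hl1mem.1, hl2mem.1]
        · linarith [hl1mem.2, hl2mem.2]
      have hd12 : dist (g l1) (g l2) = L / 2 ^ n := by
        rw [hg l1 l2 hl1mem hl2mem]
        have : |l1 - l2| = 1 / 2 ^ n := by
          rw [hl1, hl2, abs_sub_comm]
          rw [show ((k:ℝ)+1)/2^n - (k:ℝ)/2^n = 1/2^n by field_simp; ring]
          rw [abs_of_pos (by positivity)]
        rw [this]; ring
      have hd1m : dist (g l1) (g ((l1+l2)/2)) = dist (g l1) (g l2) / 2 := by
        rw [hg l1 ((l1+l2)/2) hl1mem hmmem, hd12]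
        rw [show l1 - (l1+l2)/2 = -(1/2^n/2) by rw [hl1, hl2]; field_simp; ring]
        rw [abs_neg, abs_of_pos (by positivity)]; ring
      have hd2m : dist (g l2) (g ((l1+l2)/2)) = dist (g l1) (g l2) / 2 := by
        rw [hg l2 ((l1+l2)/2) hl2mem hmmem, hd12]
        rw [show l2 - (l1+l2)/2 = (1/2^n)/2 by rw [hl1, hl2]; field_simp; ring]
        rw [abs_of_pos (by positivity)]; ring
      obtain ⟨m0, hm1, hm2, hCN⟩ := hX (g l1) (g l2)
      have hgm : g ((l1+l2)/2) = m0 :=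
        myMidUnique hX hd1m hd2m hm1 hm2
      have hCNx := hCN x
      rw [← hgm, hd12] at hCNx
      have IH1 := IH k hk0
      have IH2 := IH (k+1) hk1
      rw [show ((k:ℕ):ℝ)/2^n = l1 by rw [hl1]] at IH1
      rw [show (((k+1):ℕ):ℝ)/2^n = l2 by push_cast; rw [hl2]] at IH2
      rw [hcast]
      have hdiff : l2 = l1 + 1 / 2 ^ n := by rw [hl1, hl2]; field_simp
      have hlam2 : (l1 + l2)/2 * (1 - (l1+l2)/2) * L ^ 2
          = (l1 * (1 - l1) * L ^ 2 + l2 * (1 - l2) * L ^ 2) / 2 + (L / 2 ^ n) ^ 2 / 4 := by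
        rw [hdiff]; ring
      linarith [hCNx, IH1, IH2, hlam2]

/-- Convexity estimate along a geodesic in a CAT(0) space, for an arbitrary
parameter `lam ∈ [0,1]`, obtained from the dyadic case by continuity. -/
lemma myConvexAlong (hX : IsCAT0 X)
    (x : X) (g : ℝ → X) (L : ℝ)
    (hg : ∀ u v : ℝ, u ∈ Icc (0:ℝ) 1 → v ∈ Icc (0:ℝ) 1 → dist (g u) (g v) = |u - v| * L)
    (lam : ℝ) (hlam : lam ∈ Icc (0:ℝ) 1) :
    dist x (g lam) ^ 2 ≤
      (1 - lam) * dist x (g 0) ^ 2 + lam * dist x (g 1) ^ 2 - lam * (1 - lam) * L ^ 2 := by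
  obtain ⟨hlam0, hlam1⟩ := hlam
  have hL : 0 ≤ L := by
    have := hg 0 1 (by norm_num) (by norm_num)
    have h0 : (0:ℝ) ≤ dist (g 0) (g 1) := dist_nonneg
    rw [this] at h0; simpa using h0
  set u : ℕ → ℝ := fun n => (⌊lam * 2 ^ n⌋₊ : ℝ) / 2 ^ n with hu
  have hE : ∀ n : ℕ, (0:ℝ) < 2 ^ n := fun n => by positivity
  have hun_le : ∀ n, u n ≤ lam := by
    intro n
    rw [hu]
    rw [div_le_iff₀ (hE n)]
    exact Nat.floor_le (by positivity)
  have hun_lt : ∀ n, lam - u n ≤ 1 / 2 ^ n := by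
    intro n
    rw [hu]
    have := Nat.lt_floor_add_one (lam * 2 ^ n)
    rw [sub_le_iff_le_add, ← add_div, le_div_iff₀ (hE n)]
    linarith
  have hun_mem : ∀ n, u n ∈ Icc (0:ℝ) 1 := fun n =>
    ⟨by positivity, le_trans (hun_le n) hlam1⟩
  have hjle : ∀ n, ⌊lam * 2 ^ n⌋₊ ≤ 2 ^ n := by
    intro n
    have : lam * 2 ^ n ≤ 2 ^ n := by nlinarith [hE n]
    calc ⌊lam * 2 ^ n⌋₊ ≤ ⌊((2:ℝ) ^ n)⌋₊ := Nat.floor_le_floor this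
      _ = 2 ^ n := by
          rw [show ((2:ℝ) ^ n) = ((2 ^ n : ℕ) : ℝ) by push_cast; ring, Nat.floor_natCast]
  have hbound : ∀ n, dist x (g (u n)) ^ 2 ≤
      (1 - u n) * dist x (g 0) ^ 2 + u n * dist x (g 1) ^ 2 - u n * (1 - u n) * L ^ 2 :=
    fun n => myDyadic hX x g L hg n _ (hjle n)
  have h2 : Tendsto (fun n : ℕ => 1 / (2:ℝ) ^ n) atTop (𝓝 0) := by
    simpa [one_div_pow] using
      tendsto_pow_atTop_nhds_zero_of_lt_one (by norm_num : (0:ℝ) ≤ 1/2) (by norm_num)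
  have htend : Tendsto u atTop (𝓝 lam) :=
    tendsto_of_tendsto_of_tendsto_of_le_of_le
      (by simpa using (tendsto_const_nhds (x := lam) (f := atTop (α := ℕ))).sub h2)
      tendsto_const_nhds (fun n => by have := hun_lt n; rw [one_div] at this; linarith) hun_le
  have hgx : Tendsto (fun n => g (u n)) atTop (𝓝 (g lam)) := by
    have hgoal : Tendsto (fun n : ℕ => 1 / 2 ^ n * L) atTop (𝓝 0) := by
      have := h2.mul_const L; simpa using this
    refine tendsto_iff_dist_tendsto_zero.2 (squeeze_zero (fun n => dist_nonneg)
      (fun n => ?_) hgoal)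
    have h2' : dist (g (u n)) (g lam) = |u n - lam| * L :=
      hg _ _ (hun_mem n) ⟨hlam0, hlam1⟩
    have h3 : |u n - lam| ≤ 1 / 2 ^ n := by
      rw [abs_sub_comm, abs_of_nonneg (by linarith [hun_le n])]
      exact hun_lt n
    rw [h2']
    exact mul_le_mul_of_nonneg_right h3 hL
  have hdx : Tendsto (fun n => dist x (g (u n))) atTop (𝓝 (dist x (g lam))) :=
    Tendsto.dist tendsto_const_nhds hgx
  have hLHS : Tendsto (fun n => dist x (g (u n)) ^ 2) atTop (𝓝 (dist x (g lam) ^ 2)) :=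
    hdx.pow 2
  have hRHS : Tendsto
      (fun n => (1 - u n) * dist x (g 0) ^ 2 + u n * dist x (g 1) ^ 2
        - u n * (1 - u n) * L ^ 2) atTop
      (𝓝 ((1 - lam) * dist x (g 0) ^ 2 + lam * dist x (g 1) ^ 2
        - lam * (1 - lam) * L ^ 2)) := by
    have hcont : Continuous fun t : ℝ =>
        (1 - t) * dist x (g 0) ^ 2 + t * dist x (g 1) ^ 2 - t * (1 - t) * L ^ 2 :=
      ((((continuous_const.sub continuous_id).mul continuous_const).add
        (continuous_id.mul continuous_const)).sub
        ((continuous_id.mul (continuous_const.sub continuous_id)).mul continuous_const))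
    exact (hcont.tendsto lam).comp htend
  exact le_of_tendsto_of_tendsto' hLHS hRHS hbound

/-- Uniqueness of the nearest-point projection onto the image of a geodesic ray
in a CAT(0) space. -/
lemma myProjUnique (hX : IsCAT0 X) {r : ℝ → X} (hr : IsRay r) {x m1 m2 : X}
    (h1 : m1 ∈ r '' Ici (0:ℝ)) (h2 : m2 ∈ r '' Ici (0:ℝ))
    (hn1 : ∀ q ∈ r '' Ici (0:ℝ), dist x m1 ≤ dist x q)
    (hn2 : ∀ q ∈ r '' Ici (0:ℝ), dist x m2 ≤ dist x q) : m1 = m2 := by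
  obtain ⟨s1, hs1, he1⟩ := h1
  obtain ⟨s2, hs2, he2⟩ := h2
  have hd : dist x m1 = dist x m2 := le_antisymm (hn1 m2 ⟨s2, hs2, he2⟩) (hn2 m1 ⟨s1, hs1, he1⟩)
  have hmem : r ((s1 + s2) / 2) ∈ r '' Ici (0:ℝ) :=
    mem_image_of_mem r (by simp only [mem_Ici] at *; linarith)
  have hd12 : dist m1 m2 = |s1 - s2| := by rw [← he1, ← he2, hr s1 s2 hs1 hs2]
  have hdm1 : dist m1 (r ((s1 + s2) / 2)) = dist m1 m2 / 2 := by
    rw [hd12, ← he1, hr s1 _ hs1 (by simp only [mem_Ici] at *; linarith)]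
    rw [show s1 - (s1 + s2) / 2 = (s1 - s2) / 2 by ring, abs_div]
    simp [abs_of_nonneg]
  have hdm2 : dist m2 (r ((s1 + s2) / 2)) = dist m1 m2 / 2 := by
    rw [hd12, ← he2, hr s2 _ hs2 (by simp only [mem_Ici] at *; linarith)]
    rw [show s2 - (s1 + s2) / 2 = -((s1 - s2) / 2) by ring, abs_neg, abs_div]
    simp [abs_of_nonneg]
  obtain ⟨m0, hm01, hm02, hCN⟩ := hX m1 m2
  have hmid : r ((s1 + s2) / 2) = m0 := myMidUnique hX hdm1 hdm2 hm01 hm02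
  have hCNx := hCN x
  have hle : dist x m1 ≤ dist x m0 := by
    rw [← hmid]; exact hn1 _ hmem
  rw [← hd] at hCNx
  have : dist m1 m2 ^ 2 ≤ 0 := by
    nlinarith [hCNx, hle, dist_nonneg (x := x) (y := m1), dist_nonneg (x := x) (y := m0)]
  have h0 : dist m1 m2 = 0 := by nlinarith [dist_nonneg (x := m1) (y := m2)]
  exact dist_eq_zero.mp h0

/-- The dichotomy: any point projects to the tip `z` on at least one of the two rays. -/
lemma myDichotomy (hX : IsCAT0 X) (z : X) (a b : ℝ → X)
    (hra : IsRay a) (hrb : IsRay b) (ha0 : a 0 = z) (hb0 : b 0 = z)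
    (c : ℝ → X) (hca0 : ∀ s : ℝ, 0 ≤ s → c (-s) = a s) (hcb0 : ∀ t : ℝ, 0 ≤ t → c t = b t)
    (hgeo : IsGeodesicLine c)
    (πa πb : X → X) (hπa : IsProjOn (a '' Ici (0:ℝ)) πa) (hπb : IsProjOn (b '' Ici (0:ℝ)) πb)
    (x : X) : πa x = z ∨ πb x = z := by
  have hzA : z ∈ a '' Ici (0:ℝ) := ⟨0, mem_Ici.mpr (le_refl 0), ha0⟩
  have hzB : z ∈ b '' Ici (0:ℝ) := ⟨0, mem_Ici.mpr (le_refl 0), hb0⟩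
  obtain ⟨s, hs, hsa⟩ := (hπa x).1
  obtain ⟨t, ht, htb⟩ := (hπb x).1
  simp only [mem_Ici] at hs ht
  rcases eq_or_lt_of_le hs with h | hs'
  · left; rw [← hsa, ← h, ha0]
  rcases eq_or_lt_of_le ht with h | ht'
  · right; rw [← htb, ← h, hb0]
  exfalso
  have hst : (0:ℝ) < s + t := by linarith
  set g : ℝ → X := fun u => c (-s + u * (s + t)) with hg
  have hgseg : ∀ u v : ℝ, u ∈ Icc (0:ℝ) 1 → v ∈ Icc (0:ℝ) 1 →
      dist (g u) (g v) = |u - v| * (s + t) := by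
    intro u v _ _
    rw [hg]
    simp only
    rw [hgeo]
    rw [show (-s + u*(s+t)) - (-s + v*(s+t)) = (u - v)*(s+t) by ring, abs_mul,
      abs_of_nonneg (le_of_lt hst)]
  have h0 : g 0 = πa x := by
    rw [hg]; simp only [zero_mul, add_zero]
    rw [hca0 s (le_of_lt hs'), hsa]
  have h1 : g 1 = πb x := by
    rw [hg]; simp only [one_mul]
    rw [show -s + (s + t) = t by ring, hcb0 t (le_of_lt ht'), htb]
  have hzg : g (s / (s + t)) = z := by
    rw [hg]; simp only
    rw [show -s + s / (s + t) * (s + t) = -(0:ℝ) by field_simp; ring, hca0 0 (le_refl 0), ha0]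
  set lam : ℝ := s / (s + t) with hlam
  have hlammem : lam ∈ Icc (0:ℝ) 1 := by
    constructor
    · positivity
    · rw [hlam, div_le_one hst]; linarith
  have hconv := myConvexAlong hX x g (s + t) hgseg lam hlammem
  rw [h0, h1, hzg] at hconv
  have hα : dist x (πa x) ≤ dist x z := (hπa x).2 z hzA
  have hβ : dist x (πb x) ≤ dist x z := (hπb x).2 z hzB
  have hprod : lam * (1 - lam) * (s + t) ^ 2 = s * t := by
    rw [hlam]; field_simp; ring
  have hα2 : dist x (πa x) ^ 2 ≤ dist x z ^ 2 := by
    nlinarith [dist_nonneg (x := x) (y := πa x)]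
  have hβ2 : dist x (πb x) ^ 2 ≤ dist x z ^ 2 := by
    nlinarith [dist_nonneg (x := x) (y := πb x)]
  have h1l : (0:ℝ) ≤ 1 - lam := by linarith [hlammem.2]
  have hcomb : (1 - lam) * dist x (πa x) ^ 2 + lam * dist x (πb x) ^ 2 ≤ dist x z ^ 2 := by
    nlinarith [mul_le_mul_of_nonneg_left hα2 h1l, mul_le_mul_of_nonneg_left hβ2 hlammem.1]
  nlinarith [hconv, hcomb, hprod, mul_pos hs' ht']

theorem concat_contracting (hX : IsCAT0 X) (z : X) (a b : ℝ → X)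
    (hra : IsRay a) (hrb : IsRay b) (ha0 : a 0 = z) (hb0 : b 0 = z)
    (c : ℝ → X) (hc : ∀ t : ℝ, c t = if t ≤ 0 then a (-t) else b t)
    (hgeo : IsGeodesicLine c)
    (A B : ℝ) (hA : ContractingSet A (a '' Ici (0:ℝ)))
    (hB : ContractingSet B (b '' Ici (0:ℝ))) :
    ContractingSet (A + B) (range c) := by
  classical
  obtain ⟨πa, hπa, hca⟩ := hA
  obtain ⟨πb, hπb, hcb⟩ := hB
  have hca0 : ∀ s : ℝ, 0 ≤ s → c (-s) = a s := by
    intro s hs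
    rw [hc, if_pos (neg_nonpos.mpr hs), neg_neg]
  have hcb0 : ∀ t : ℝ, 0 ≤ t → c t = b t := by
    intro t ht
    rcases eq_or_lt_of_le ht with h | h
    · rw [hc, if_pos (le_of_eq h.symm), ← h, neg_zero, ha0, hb0]
    · rw [hc, if_neg (not_le.mpr h)]
  have hsubA : a '' Ici (0:ℝ) ⊆ range c := by
    rintro _ ⟨s, hs, rfl⟩; exact ⟨-s, hca0 s hs⟩
  have hsubB : b '' Ici (0:ℝ) ⊆ range c := by
    rintro _ ⟨t, ht, rfl⟩; exact ⟨t, hcb0 t ht⟩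
  have hcup : range c ⊆ a '' Ici (0:ℝ) ∪ b '' Ici (0:ℝ) := by
    rintro _ ⟨t, rfl⟩
    by_cases h : t ≤ 0
    · left; rw [hc, if_pos h]
      exact mem_image_of_mem a (mem_Ici.mpr (by linarith))
    · right; rw [hc, if_neg h]
      exact mem_image_of_mem b (mem_Ici.mpr (by push_neg at h; linarith))
  have hzA : z ∈ a '' Ici (0:ℝ) := ⟨0, mem_Ici.mpr (le_refl 0), ha0⟩
  have hzB : z ∈ b '' Ici (0:ℝ) := ⟨0, mem_Ici.mpr (le_refl 0), hb0⟩
  have hdich : ∀ x : X, πa x = z ∨ πb x = z :=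
    myDichotomy hX z a b hra hrb ha0 hb0 c hca0 hcb0 hgeo πa πb hπa hπb
  set π : X → X := fun p => if dist p (πa p) ≤ dist p (πb p) then πa p else πb p with hπ
  have hminA : ∀ p, dist p (π p) ≤ dist p (πa p) := by
    intro p
    rw [hπ]; simp only
    by_cases h : dist p (πa p) ≤ dist p (πb p)
    · rw [if_pos h]
    · rw [if_neg h]; linarith [not_le.mp h]
  have hminB : ∀ p, dist p (π p) ≤ dist p (πb p) := by
    intro p
    rw [hπ]; simp only
    by_cases h : dist p (πa p) ≤ dist p (πb p)
    · rw [if_pos h]; exact h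
    · rw [if_neg h]
  have hproj : IsProjOn (range c) π := by
    intro p
    constructor
    · rw [hπ]; simp only
      by_cases h : dist p (πa p) ≤ dist p (πb p)
      · rw [if_pos h]; exact hsubA (hπa p).1
      · rw [if_neg h]; exact hsubB (hπb p).1
    · intro q hq
      rcases hcup hq with hqa | hqb
      · exact le_trans (hminA p) ((hπa p).2 q hqa)
      · exact le_trans (hminB p) ((hπb p).2 q hqb)
  -- key mixed-case bound
  have hkey : ∀ p q : X, dist p (πa p) ≤ dist p (πb p) → dist q (πb q) ≤ dist q (πa q) →
      dist (πa p) (πb q) ≤ dist (πa p) (πa q) + dist (πb p) (πb q) := by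
    intro p q hp hq
    rcases hdich p with hpa | hpb
    · -- πa p = z, hence πb p = z as well
      have hpbz : πb p = z := by
        refine myProjUnique hX hrb (hπb p).1 hzB (fun r hr => (hπb p).2 r hr)
          (fun r hr => ?_)
        calc dist p z = dist p (πa p) := by rw [hpa]
          _ ≤ dist p (πb p) := hp
          _ ≤ dist p r := (hπb p).2 r hr
      rcases hdich q with hqa | hqb
      · rw [hpa, hqa, hpbz]
        simp [dist_comm]
      · rw [hpa, hqb, dist_self]
        positivity
    · -- πb p = z
      rcases hdich q with hqa | hqb
      · calc dist (πa p) (πb q) ≤ dist (πa p) z + dist z (πb q) := dist_triangle _ _ _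
          _ = dist (πa p) (πa q) + dist (πb p) (πb q) := by rw [hqa, hpb]
      · -- πb q = z, hence πa q = z as well
        have hqaz : πa q = z := by
          refine myProjUnique hX hra (hπa q).1 hzA (fun r hr => (hπa q).2 r hr)
            (fun r hr => ?_)
          calc dist q z = dist q (πb q) := by rw [hqb]
            _ ≤ dist q (πa q) := hq
            _ ≤ dist q r := (hπa q).2 r hr
        rw [hqaz, hqb, hpb]
        simp [dist_nonneg]
  refine ⟨π, hproj, ?_⟩
  intro p q hlt
  have h1 : dist (πa p) (πa q) < A := hca p q (lt_of_lt_of_le hlt (hminA p))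
  have h2 : dist (πb p) (πb q) < B := hcb p q (lt_of_lt_of_le hlt (hminB p))
  have hA0 : 0 < A := lt_of_le_of_lt dist_nonneg h1
  have hB0 : 0 < B := lt_of_le_of_lt dist_nonneg h2
  rw [hπ]; simp only
  by_cases hp : dist p (πa p) ≤ dist p (πb p) <;>
    by_cases hq : dist q (πa q) ≤ dist q (πb q)
  · rw [if_pos hp, if_pos hq]; linarith
  · rw [if_pos hp, if_neg hq]
    have := hkey p q hp (le_of_lt (not_le.mp hq))
    linarith
  · rw [if_neg hp, if_pos hq]
    have h3 := hkey q p hq (le_of_lt (not_le.mp hp))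
    rw [dist_comm (πa q) (πa p), dist_comm (πb q) (πb p)] at h3
    rw [dist_comm (πb p) (πa q)]
    linarith
  · rw [if_neg hp, if_neg hq]; linarith
end

section
/- If a geodesic a in a proper CAT(0) space is δ-slim, then for any point x ∈ X and any geodesic ray r from x asymptotic to a (i.e. r = [x, a(∞))), the distance from the projection π_a(x) to the ray r is at most δ. -/
open Metric Set Filter
open Topology

variable {X : Type*} [MetricSpace X]

section Construction

def IsMid (x y m : X) : Prop := dist x m = dist x y / 2 ∧ dist y m = dist x y / 2

lemma IsMid.symm {x y m : X} (h : IsMid x y m) : IsMid y x m :=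
  ⟨h.2.trans (by rw [dist_comm]), h.1.trans (by rw [dist_comm])⟩

lemma cn_of_mid (hX : IsCAT0 X) {x y m : X} (h : IsMid x y m) (z : X) :
    dist z m ^ 2 ≤ (dist z x ^ 2 + dist z y ^ 2) / 2 - dist x y ^ 2 / 4 := by
  obtain ⟨m', h1, h2, hcn⟩ := hX x y
  have hm : dist m m' = 0 := by
    have := hcn m
    rw [dist_comm m x, dist_comm m y, h.1, h.2] at this
    nlinarith [dist_nonneg (x := m) (y := m')]
  have : m = m' := by rwa [dist_eq_zero] at hm
  subst this
  exact hcn z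

/-- common start point midpoint comparison -/
lemma mid_common (hX : IsCAT0 X) {x p q m m' : X}
    (hm : IsMid x p m) (hm' : IsMid x q m') : dist m m' ≤ dist p q / 2 := by
  have h1 := cn_of_mid hX hm q
  have h2 := cn_of_mid hX hm' m
  rw [dist_comm m x, hm.1] at h2
  rw [dist_comm q p, dist_comm q x, dist_comm q m] at h1
  have : dist m m' ^ 2 ≤ dist p q ^ 2 / 4 := by nlinarith
  nlinarith [dist_nonneg (x := m) (y := m'), dist_nonneg (x := p) (y := q)]

lemma mid_general (hX : IsCAT0 X) {p0 p1 q0 q1 m m' : X}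
    (hm : IsMid p0 p1 m) (hm' : IsMid q0 q1 m') :
    dist m m' ≤ (dist p0 q0 + dist p1 q1) / 2 := by
  obtain ⟨n, h1, h2, _⟩ := hX p0 q1
  have hn : IsMid p0 q1 n := ⟨h1, h2⟩
  have A : dist m n ≤ dist p1 q1 / 2 := mid_common hX hm hn
  have B : dist n m' ≤ dist p0 q0 / 2 := mid_common hX hn.symm hm'.symm
  calc dist m m' ≤ dist m n + dist n m' := dist_triangle _ _ _
    _ ≤ _ := by linarith

lemma geo_mid {g : ℝ → X} {y z : X} (hg : IsGeodesicSeg g y z) {s t : ℝ}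
    (hs : s ∈ Icc 0 (dist y z)) (ht : t ∈ Icc 0 (dist y z)) :
    IsMid (g s) (g t) (g ((s + t) / 2)) := by
  have hmid : (s + t) / 2 ∈ Icc 0 (dist y z) :=
    ⟨by linarith [hs.1, ht.1], by linarith [hs.2, ht.2]⟩
  have e1 : dist (g s) (g ((s + t) / 2)) = |s - t| / 2 := by
    rw [hg.2.2 s _ hs hmid]
    rw [show s - (s + t) / 2 = (s - t) / 2 by ring, abs_div, abs_two]
  have e2 : dist (g t) (g ((s + t) / 2)) = |s - t| / 2 := by
    rw [hg.2.2 t _ ht hmid]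
    rw [show t - (s + t) / 2 = -((s - t) / 2) by ring, abs_neg, abs_div, abs_two]
  exact ⟨by rw [e1, hg.2.2 s t hs ht], by rw [e2, hg.2.2 s t hs ht]⟩

/-- The main CAT(0) convexity comparison: two geodesics from a common point. -/
lemma comparison (hX : IsCAT0 X) {g h : ℝ → X} {x p q : X}
    (hg : IsGeodesicSeg g x p) (hh : IsGeodesicSeg h x q) {l : ℝ}
    (hl0 : 0 ≤ l) (hl1 : l ≤ 1) :
    dist (g (l * dist x p)) (h (l * dist x q)) ≤ l * dist p q := by
  set L := dist x p with hL
  set T := dist x q with hT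
  have hL0 : 0 ≤ L := dist_nonneg
  have hT0 : 0 ≤ T := dist_nonneg
  set F : ℝ → ℝ := fun u => dist (g (u * L)) (h (u * T)) with hF
  have memg : ∀ {u : ℝ}, 0 ≤ u → u ≤ 1 → u * L ∈ Icc 0 L := fun hu0 hu1 =>
    ⟨mul_nonneg hu0 hL0, by nlinarith⟩
  have memh : ∀ {u : ℝ}, 0 ≤ u → u ≤ 1 → u * T ∈ Icc 0 T := fun hu0 hu1 =>
    ⟨mul_nonneg hu0 hT0, by nlinarith⟩
  -- midpoint convexity
  have step1 : ∀ u v : ℝ, 0 ≤ u → u ≤ 1 → 0 ≤ v → v ≤ 1 →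
      F ((u + v) / 2) ≤ (F u + F v) / 2 := by
    intro u v hu0 hu1 hv0 hv1
    have h1 : IsMid (g (u * L)) (g (v * L)) (g (((u + v) / 2) * L)) := by
      have := geo_mid hg (memg hu0 hu1) (memg hv0 hv1)
      rwa [show (u * L + v * L) / 2 = ((u + v) / 2) * L by ring] at this
    have h2 : IsMid (h (u * T)) (h (v * T)) (h (((u + v) / 2) * T)) := by
      have := geo_mid hh (memh hu0 hu1) (memh hv0 hv1)
      rwa [show (u * T + v * T) / 2 = ((u + v) / 2) * T by ring] at this
    exact mid_general hX h1 h2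
  have hF0 : F 0 = 0 := by
    simp only [hF, zero_mul]
    rw [hg.1, hh.1, dist_self]
  have hF1nn : 0 ≤ F 1 := dist_nonneg
  -- dyadic bound
  have step2 : ∀ n : ℕ, ∀ k : ℕ, k ≤ 2 ^ n → F ((k : ℝ) / 2 ^ n) ≤ ((k : ℝ) / 2 ^ n) * F 1 := by
    intro n
    induction n with
    | zero =>
      intro k hk
      interval_cases k
      · simpa using hF0.le
      · simp
    | succ n ih =>
      intro k hk
      rcases Nat.even_or_odd k with ⟨j, hj⟩ | ⟨j, hj⟩
      · subst hj
        have hj2 : j ≤ 2 ^ n := by omega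
        have : ((j + j : ℕ) : ℝ) / 2 ^ (n + 1) = (j : ℝ) / 2 ^ n := by
          push_cast; ring
        rw [this]
        exact ih j hj2
      · subst hj
        have hj2 : j + 1 ≤ 2 ^ n := by omega
        have hj1 : j ≤ 2 ^ n := by omega
        have hu0 : (0:ℝ) ≤ (j : ℝ) / 2 ^ n := by positivity
        have hu1 : (j : ℝ) / 2 ^ n ≤ 1 := by
          rw [div_le_one (by positivity)]
          exact_mod_cast Nat.cast_le.mpr hj1 |>.trans_eq (by push_cast; ring)
        have hv0 : (0:ℝ) ≤ ((j : ℝ) + 1) / 2 ^ n := by positivity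
        have hv1 : ((j : ℝ) + 1) / 2 ^ n ≤ 1 := by
          rw [div_le_one (by positivity)]
          exact_mod_cast Nat.cast_le.mpr hj2 |>.trans_eq (by push_cast; ring)
        have key := step1 _ _ hu0 hu1 hv0 hv1
        have e : ((2 * j + 1 : ℕ) : ℝ) / 2 ^ (n + 1) =
            ((j : ℝ) / 2 ^ n + ((j : ℝ) + 1) / 2 ^ n) / 2 := by
          push_cast; ring
        rw [e]
        refine key.trans ?_
        have b1 := ih j hj1
        have b2 : F (((j : ℝ) + 1) / 2 ^ n) ≤ (((j : ℝ) + 1) / 2 ^ n) * F 1 := by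
          have := ih (j + 1) hj2
          push_cast at this
          exact this
        calc (F ((j : ℝ) / 2 ^ n) + F (((j : ℝ) + 1) / 2 ^ n)) / 2
            ≤ (((j : ℝ) / 2 ^ n) * F 1 + (((j : ℝ) + 1) / 2 ^ n) * F 1) / 2 := by linarith
          _ = ((j : ℝ) / 2 ^ n + ((j : ℝ) + 1) / 2 ^ n) / 2 * F 1 := by ring

  -- Lipschitz bound
  have step3 : ∀ u v : ℝ, 0 ≤ u → u ≤ 1 → 0 ≤ v → v ≤ 1 →
      F u ≤ F v + |u - v| * (L + T) := by
    intro u v hu0 hu1 hv0 hv1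
    have d1 : dist (g (u * L)) (g (v * L)) = |u - v| * L := by
      rw [hg.2.2 _ _ (memg hu0 hu1) (memg hv0 hv1),
        show u * L - v * L = (u - v) * L by ring, abs_mul, abs_of_nonneg hL0]
    have d2 : dist (h (u * T)) (h (v * T)) = |u - v| * T := by
      rw [hh.2.2 _ _ (memh hu0 hu1) (memh hv0 hv1),
        show u * T - v * T = (u - v) * T by ring, abs_mul, abs_of_nonneg hT0]
    calc F u ≤ dist (g (u * L)) (g (v * L)) + F v + dist (h (v * T)) (h (u * T)) :=
          dist_triangle4 _ _ _ _
      _ = F v + (|u - v| * L + |u - v| * T) := by rw [d1, dist_comm (h (v*T)), d2]; ring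
      _ = F v + |u - v| * (L + T) := by ring
  -- conclude for arbitrary l via floor approximation
  have main : F l ≤ l * F 1 := by
    refine le_of_forall_pos_le_add ?_
    intro ε hε
    obtain ⟨n, hn⟩ := exists_pow_lt_of_lt_one (show (0:ℝ) < ε / (L + T + 1) by positivity)
      (show (2⁻¹ : ℝ) < 1 by norm_num)
    set k := ⌊l * 2 ^ n⌋₊ with hk
    have hkle : (k : ℝ) ≤ l * 2 ^ n := Nat.floor_le (by positivity)
    have hklt : l * 2 ^ n < (k : ℝ) + 1 := Nat.lt_floor_add_one _
    have hpow : (0:ℝ) < 2 ^ n := by positivity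
    have hk2 : k ≤ 2 ^ n := by
      have h2n : (k : ℝ) ≤ 2 ^ n := hkle.trans (by nlinarith)
      exact_mod_cast h2n
    set u := (k : ℝ) / 2 ^ n with hu
    have hu0 : 0 ≤ u := by positivity
    have hul : u ≤ l := by rw [hu, div_le_iff₀ hpow]; linarith
    have hlu : l - u < 1 / 2 ^ n := by
      have e : ((k:ℝ) + 1) / 2 ^ n = u + 1 / 2 ^ n := by rw [hu]; ring
      have : l < ((k:ℝ) + 1) / 2 ^ n := by rw [lt_div_iff₀ hpow]; linarith
      linarith [this.trans_eq e]
    have h3 := step3 l u hl0 hl1 hu0 (hul.trans hl1)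
    have habs : |l - u| = l - u := abs_of_nonneg (by linarith)
    have h2 := step2 n k hk2
    have hhalf : (1:ℝ) / 2 ^ n = (2⁻¹ : ℝ) ^ n := by rw [one_div, inv_pow]
    have hLT : (0:ℝ) ≤ L + T := by linarith
    calc F l ≤ F u + |l - u| * (L + T) := h3
      _ ≤ u * F 1 + (1 / 2 ^ n) * (L + T) := by
          have hb : |l - u| * (L + T) ≤ (1 / 2 ^ n) * (L + T) := by
            apply mul_le_mul_of_nonneg_right _ hLT
            rw [habs]; linarith
          linarith [h2]
      _ ≤ l * F 1 + ε := by
          have b1 : u * F 1 ≤ l * F 1 := mul_le_mul_of_nonneg_right hul hF1nn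
          have b2 : (1 / 2 ^ n) * (L + T) ≤ ε := by
            rw [hhalf]
            calc (2⁻¹:ℝ) ^ n * (L + T) ≤ (ε / (L + T + 1)) * (L + T) :=
                  mul_le_mul_of_nonneg_right hn.le hLT
              _ ≤ ε := by
                  rw [div_mul_eq_mul_div, div_le_iff₀ (by linarith)]
                  nlinarith
          linarith
  have : dist (g (l * L)) (h (l * T)) = F l := rfl
  rw [this]
  refine main.trans ?_
  have : F 1 ≤ dist p q := by
    have e1 : g (1 * L) = p := by rw [one_mul]; exact hg.2.1
    have e2 : h (1 * T) = q := by rw [one_mul]; exact hh.2.1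
    simp only [hF, e1, e2, le_refl]
  nlinarith

noncomputable def midf (hX : IsCAT0 X) (x y : X) : X := (hX x y).choose

lemma midf_spec (hX : IsCAT0 X) (x y : X) : IsMid x y (midf hX x y) :=
  ⟨(hX x y).choose_spec.1, (hX x y).choose_spec.2.1⟩

noncomputable def dy (hX : IsCAT0 X) (p q : X) : ℕ → ℕ → X
  | 0, k => if k = 0 then p else q
  | (n+1), k =>
    if k % 2 = 0 then dy hX p q n (k / 2)
    else midf hX (dy hX p q n (k / 2)) (dy hX p q n (k / 2 + 1))

variable (hX : IsCAT0 X) (p q : X)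

lemma dy_even (n k : ℕ) : dy hX p q (n+1) (2*k) = dy hX p q n k := by
  simp [dy, Nat.mul_mod_right, Nat.mul_div_cancel_left _ (by norm_num : 0 < 2)]

lemma dy_odd (n k : ℕ) :
    dy hX p q (n+1) (2*k+1) = midf hX (dy hX p q n k) (dy hX p q n (k+1)) := by
  have h1 : (2*k+1) % 2 = 1 := by omega
  have h2 : (2*k+1) / 2 = k := by omega
  simp [dy, h1, h2]

lemma dy_zero (n : ℕ) : dy hX p q n 0 = p := by
  induction n with
  | zero => simp [dy]
  | succ n ih => simpa using (dy_even hX p q n 0).symm ▸ (by simpa using ih)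

lemma dy_top (n : ℕ) : dy hX p q n (2^n) = q := by
  induction n with
  | zero => simp [dy]
  | succ n ih =>
    have : 2 ^ (n+1) = 2 * 2 ^ n := by ring
    rw [this, dy_even]; exact ih

lemma dy_consec : ∀ n k, k < 2^n →
    dist (dy hX p q n k) (dy hX p q n (k+1)) = dist p q / 2^n := by
  intro n
  induction n with
  | zero =>
    intro k hk
    interval_cases k
    simp [dy]
  | succ n ih =>
    intro k hk
    rcases Nat.even_or_odd k with ⟨j, hj⟩ | ⟨j, hj⟩
    · have hj' : k = 2 * j := by omega
      subst hj'
      have hjn : j < 2 ^ n := by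
        have : 2 ^ (n+1) = 2 * 2 ^ n := by ring
        omega
      rw [dy_even, dy_odd]
      have hm := midf_spec hX (dy hX p q n j) (dy hX p q n (j+1))
      rw [hm.1, ih j hjn]
      ring
    · subst hj
      have hjn : j + 1 ≤ 2 ^ n := by
        have : 2 ^ (n+1) = 2 * 2 ^ n := by ring
        omega
      have hjlt : j < 2 ^ n := by omega
      have e2 : 2 * j + 1 + 1 = 2 * (j + 1) := by ring
      rw [dy_odd, e2, dy_even]
      have hm := midf_spec hX (dy hX p q n j) (dy hX p q n (j+1))
      rw [dist_comm _ (dy hX p q n (j+1)), hm.2, ih j hjlt]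
      ring

lemma dy_upper : ∀ n k j, k + j ≤ 2^n →
    dist (dy hX p q n k) (dy hX p q n (k+j)) ≤ j * (dist p q / 2^n) := by
  intro n k j
  induction j with
  | zero => simp
  | succ j ih =>
    intro h
    have h1 : k + j ≤ 2 ^ n := by omega
    have h2 : k + j < 2 ^ n := by omega
    calc dist (dy hX p q n k) (dy hX p q n (k+(j+1)))
        ≤ dist (dy hX p q n k) (dy hX p q n (k+j)) +
          dist (dy hX p q n (k+j)) (dy hX p q n (k+j+1)) := by
          rw [show k+(j+1) = k+j+1 by ring]; exact dist_triangle _ _ _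
      _ ≤ j * (dist p q / 2^n) + dist p q / 2^n := by
          have := ih h1
          have hc := dy_consec hX p q n (k+j) h2
          rw [hc]; linarith
      _ = (j+1 : ℕ) * (dist p q / 2^n) := by push_cast; ring

lemma dy_dist : ∀ n k j, k + j ≤ 2^n →
    dist (dy hX p q n k) (dy hX p q n (k+j)) = j * (dist p q / 2^n) := by
  intro n k j h
  refine le_antisymm (dy_upper hX p q n k j h) ?_
  set c := dist p q / 2^n with hc
  have hcd : dist p q = (2^n : ℝ) * c := by rw [hc]; field_simp
  have t1 : dist p (dy hX p q n k) ≤ k * c := by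
    have := dy_upper hX p q n 0 k (by omega)
    rwa [dy_zero, zero_add] at this
  have t2 : dist (dy hX p q n (k+j)) q ≤ ((2^n - (k+j) : ℕ) : ℝ) * c := by
    have := dy_upper hX p q n (k+j) (2^n - (k+j)) (by omega)
    rwa [show k + j + (2^n - (k+j)) = 2^n by omega, dy_top] at this
  have tt : dist p q ≤ dist p (dy hX p q n k) +
      dist (dy hX p q n k) (dy hX p q n (k+j)) +
      dist (dy hX p q n (k+j)) q :=
    dist_triangle4 p (dy hX p q n k) (dy hX p q n (k+j)) q
  have hcast : ((2^n - (k+j) : ℕ) : ℝ) = (2^n : ℝ) - (k : ℝ) - (j : ℝ) := by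
    push_cast [Nat.cast_sub h]
    push_cast
    ring
  rw [hcast] at t2
  rw [hcd] at tt
  linarith

lemma seq_cauchy {t : ℝ} (ht0 : 0 ≤ t) (ht1 : t ≤ 1) :
    CauchySeq (fun n => dy hX p q n ⌊t * 2^n⌋₊) := by
  apply cauchySeq_of_le_geometric (1/2 : ℝ) (dist p q) (by norm_num)
  intro n
  set kn := ⌊t * 2^n⌋₊ with hkn
  set kn' := ⌊t * 2^(n+1)⌋₊ with hkn'
  have hp : (0:ℝ) < 2 ^ n := by positivity
  have hp2 : (0:ℝ) < 2 ^ (n+1) := by positivity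
  have hsucc : (2:ℝ)^(n+1) = 2 * 2^n := by ring
  have h1 : (kn : ℝ) ≤ t * 2^n := Nat.floor_le (by positivity)
  have h2 : t * 2^n < (kn : ℝ) + 1 := Nat.lt_floor_add_one _
  have h3 : (kn' : ℝ) ≤ t * 2^(n+1) := Nat.floor_le (by positivity)
  have h4 : t * 2^(n+1) < (kn' : ℝ) + 1 := Nat.lt_floor_add_one _
  have hle : 2 * kn ≤ kn' := by
    have : ((2 * kn : ℕ) : ℝ) ≤ t * 2^(n+1) := by push_cast; nlinarith
    exact Nat.le_floor this
  have hlt : kn' ≤ 2 * kn + 1 := by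
    have : (kn' : ℝ) < ((2 * kn + 2 : ℕ) : ℝ) := by push_cast; nlinarith
    have := Nat.cast_lt.mp this
    omega
  have hbound : kn' ≤ 2 ^ (n+1) := by
    have : (kn' : ℝ) ≤ ((2 ^ (n+1) : ℕ) : ℝ) := by
      push_cast
      nlinarith
    exact Nat.cast_le.mp this
  have heq : dy hX p q n kn = dy hX p q (n+1) (2 * kn) := (dy_even hX p q n kn).symm
  rw [heq]
  obtain ⟨j, hj⟩ : ∃ j, kn' = 2 * kn + j := ⟨kn' - 2 * kn, by omega⟩
  have hj1 : j ≤ 1 := by omega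
  rw [hj]
  have := dy_upper hX p q (n+1) (2*kn) j (by omega)
  refine this.trans ?_
  have hd : (0:ℝ) ≤ dist p q := dist_nonneg
  have : (j : ℝ) ≤ 1 := by exact_mod_cast hj1
  have e : dist p q / 2 ^ (n+1) = (dist p q * (1/2)^n) / 2 := by
    rw [hsucc, div_pow, one_pow]
    ring
  have h5 : (0:ℝ) ≤ dist p q / 2^(n+1) := by positivity
  calc (j:ℝ) * (dist p q / 2^(n+1)) ≤ 1 * (dist p q / 2^(n+1)) :=
        mul_le_mul_of_nonneg_right this h5
    _ ≤ dist p q * (1/2)^n := by rw [one_mul, e]; linarith [mul_nonneg hd (by positivity : (0:ℝ) ≤ (1/2:ℝ)^n)]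

section Limit
variable [ProperSpace X]

noncomputable def geoAux (u : ℝ) : X :=
  letI : Nonempty X := ⟨p⟩
  limUnder atTop (fun n => dy hX p q n ⌊u * 2^n⌋₊)

lemma geoAux_tendsto {u : ℝ} (hu0 : 0 ≤ u) (hu1 : u ≤ 1) :
    Tendsto (fun n => dy hX p q n ⌊u * 2^n⌋₊) atTop (𝓝 (geoAux hX p q u)) := by
  letI : Nonempty X := ⟨p⟩
  exact (seq_cauchy hX p q hu0 hu1).tendsto_limUnder

lemma tendsto_floor_div (u : ℝ) (hu : 0 ≤ u) :
    Tendsto (fun n : ℕ => (⌊u * 2^n⌋₊ : ℝ) / 2^n) atTop (𝓝 u) := by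
  have h : ∀ n : ℕ, |(⌊u * 2^n⌋₊ : ℝ) / 2^n - u| ≤ (1/2 : ℝ)^n := by
    intro n
    have hp : (0:ℝ) < 2 ^ n := by positivity
    have h1 : (⌊u * 2^n⌋₊ : ℝ) ≤ u * 2^n := Nat.floor_le (by positivity)
    have h2 : u * 2^n < (⌊u * 2^n⌋₊ : ℝ) + 1 := Nat.lt_floor_add_one _
    rw [abs_le]
    have e2 : (1:ℝ)/2^n = (1/2:ℝ)^n := by rw [div_pow, one_pow]
    constructor
    · have hlt : u < (1 + (⌊u * 2^n⌋₊:ℝ)) / 2^n := by rw [lt_div_iff₀ hp]; linarith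
      have e : (1 + (⌊u * 2^n⌋₊:ℝ))/2^n = (1:ℝ)/2^n + (⌊u * 2^n⌋₊:ℝ)/2^n := by ring
      rw [e, e2] at hlt
      linarith
    · have hle : (⌊u * 2^n⌋₊:ℝ)/2^n ≤ u := by rw [div_le_iff₀ hp]; linarith
      have h0 : (0:ℝ) ≤ (1/2:ℝ)^n := by positivity
      linarith
  have h0 : Tendsto (fun n : ℕ => (1/2 : ℝ)^n) atTop (𝓝 0) :=
    tendsto_pow_atTop_nhds_zero_of_lt_one (by norm_num) (by norm_num)
  have h' : ∀ n : ℕ, ‖(⌊u * 2^n⌋₊ : ℝ) / 2^n - u‖ ≤ (1/2 : ℝ)^n := by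
    intro n; rw [Real.norm_eq_abs]; exact h n
  have := squeeze_zero_norm h' h0
  have h2 := this.add_const u
  simpa using h2

lemma geoAux_zero : geoAux hX p q 0 = p := by
  have h := geoAux_tendsto hX p q (le_refl (0:ℝ)) zero_le_one
  have : (fun n => dy hX p q n ⌊(0:ℝ) * 2^n⌋₊) = fun _ => p := by
    funext n
    simp [dy_zero]
  rw [this] at h
  exact (tendsto_nhds_unique tendsto_const_nhds h).symm

lemma geoAux_one : geoAux hX p q 1 = q := by
  have h := geoAux_tendsto hX p q zero_le_one (le_refl (1:ℝ))
  have : (fun n => dy hX p q n ⌊(1:ℝ) * 2^n⌋₊) = fun _ => q := by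
    funext n
    have : (1:ℝ) * 2^n = ((2^n : ℕ) : ℝ) := by push_cast; ring
    rw [this, Nat.floor_natCast, dy_top]
  rw [this] at h
  exact (tendsto_nhds_unique tendsto_const_nhds h).symm

lemma geoAux_dist_le {u v : ℝ} (hu0 : 0 ≤ u) (huv : u ≤ v) (hv1 : v ≤ 1) :
    dist (geoAux hX p q u) (geoAux hX p q v) = (v - u) * dist p q := by
  have hv0 : 0 ≤ v := hu0.trans huv
  have hu1 : u ≤ 1 := huv.trans hv1
  have hL := (geoAux_tendsto hX p q hu0 hu1).dist (geoAux_tendsto hX p q hv0 hv1)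
  have hR : Tendsto (fun n => dist (dy hX p q n ⌊u * 2^n⌋₊) (dy hX p q n ⌊v * 2^n⌋₊))
      atTop (𝓝 ((v - u) * dist p q)) := by
    have heq : ∀ n : ℕ, dist (dy hX p q n ⌊u * 2^n⌋₊) (dy hX p q n ⌊v * 2^n⌋₊)
        = ((⌊v * 2^n⌋₊ : ℝ)/2^n - (⌊u * 2^n⌋₊ : ℝ)/2^n) * dist p q := by
      intro n
      have hp : (0:ℝ) < 2 ^ n := by positivity
      set kn := ⌊u * 2^n⌋₊
      set ln := ⌊v * 2^n⌋₊
      have hkl : kn ≤ ln := Nat.floor_le_floor (by nlinarith)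
      have hln : ln ≤ 2^n := by
        have h1 : (ln : ℝ) ≤ v * 2^n := Nat.floor_le (by positivity)
        have : (ln : ℝ) ≤ ((2^n : ℕ) : ℝ) := by push_cast; nlinarith
        exact Nat.cast_le.mp this
      obtain ⟨j, hj⟩ : ∃ j, ln = kn + j := ⟨ln - kn, by omega⟩
      rw [hj]
      rw [dy_dist hX p q n kn j (by omega)]
      push_cast
      field_simp
      try ring
    rw [funext heq]
    exact ((tendsto_floor_div v hv0).sub (tendsto_floor_div u hu0)).mul_const _
  exact tendsto_nhds_unique hL hR

lemma exists_geodesic (hX : IsCAT0 X) (p q : X) : ∃ g : ℝ → X, IsGeodesicSeg g p q := by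
  by_cases hd : dist p q = 0
  · have hpq : p = q := by rwa [dist_eq_zero] at hd
    subst hpq
    refine ⟨fun _ => p, rfl, rfl, ?_⟩
    intro s t hs ht
    rw [dist_self] at hs ht
    have hs0 : s = 0 := le_antisymm hs.2 hs.1
    have ht0 : t = 0 := le_antisymm ht.2 ht.1
    subst hs0; subst ht0
    simp
  · have hd0 : 0 < dist p q := lt_of_le_of_ne dist_nonneg (Ne.symm hd)
    refine ⟨fun s => geoAux hX p q (s / dist p q), ?_, ?_, ?_⟩
    · show geoAux hX p q (0 / dist p q) = p
      rw [zero_div, geoAux_zero]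
    · show geoAux hX p q (dist p q / dist p q) = q
      rw [div_self hd, geoAux_one]
    · intro s t hs ht
      show dist (geoAux hX p q (s / dist p q)) (geoAux hX p q (t / dist p q)) = |s - t|
      have hs' : s / dist p q ∈ Icc (0:ℝ) 1 :=
        ⟨div_nonneg hs.1 hd0.le, (div_le_one hd0).mpr hs.2⟩
      have ht' : t / dist p q ∈ Icc (0:ℝ) 1 :=
        ⟨div_nonneg ht.1 hd0.le, (div_le_one hd0).mpr ht.2⟩
      rcases le_total (s / dist p q) (t / dist p q) with h | h
      · have hst : s ≤ t := by
          have h2 := mul_le_mul_of_nonneg_right h hd0.le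
          rwa [div_mul_cancel₀ _ hd, div_mul_cancel₀ _ hd] at h2
        rw [geoAux_dist_le hX p q hs'.1 h ht'.2, abs_sub_comm,
          abs_of_nonneg (by linarith)]
        field_simp
        try ring
      · have hst : t ≤ s := by
          have h2 := mul_le_mul_of_nonneg_right h hd0.le
          rwa [div_mul_cancel₀ _ hd, div_mul_cancel₀ _ hd] at h2
        rw [dist_comm, geoAux_dist_le hX p q ht'.1 h hs'.2,
          abs_of_nonneg (by linarith)]
        field_simp
        try ring

end Limit


end Construction

theorem slim_extends_to_infinity [ProperSpace X] (hX : IsCAT0 X)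
    (a : ℝ → X) (ha : IsRay a) (δ : ℝ) (π : X → X)
    (hproj : IsProjOn (a '' Ici (0:ℝ)) π)
    (hslim : SlimWith δ (a '' Ici (0:ℝ)) π)
    (x : X) (r : ℝ → X) (hr : IsRay r) (hr0 : r 0 = x) (hasymp : Asymp r a) :
    infDist (π x) (r '' Ici (0:ℝ)) ≤ δ := by
  obtain ⟨M, hM⟩ := hasymp
  have hM0 : 0 ≤ M := le_trans dist_nonneg (hM 0 le_rfl)
  refine le_of_forall_pos_le_add ?_
  intro ε hε
  set B := dist x (π x) + δ with hB
  set t := dist x (a 0) + max 1 (B * M / ε) with ht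
  clear_value B t
  have hmax1 : (1:ℝ) ≤ max 1 (B * M / ε) := le_max_left _ _
  have hmax2 : B * M / ε ≤ max 1 (B * M / ε) := le_max_right _ _
  have ht0 : 0 ≤ t := by
    have : (0:ℝ) ≤ dist x (a 0) := dist_nonneg
    linarith
  set L := dist x (a t) with hL
  clear_value L
  have hLlow : max 1 (B * M / ε) ≤ L := by
    have h1 : dist (a 0) (a t) = t := by
      rw [ha 0 t le_rfl ht0, abs_of_nonpos (by linarith), neg_sub, sub_zero]
    have h2 : dist (a 0) (a t) ≤ dist (a 0) x + dist x (a t) := dist_triangle _ _ _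
    rw [h1, dist_comm (a 0) x] at h2
    rw [hL]
    linarith [h2, ht.ge]
  have hL1 : (1:ℝ) ≤ L := le_trans hmax1 hLlow
  have hL0 : (0:ℝ) < L := by linarith
  -- geodesic from x to a t
  obtain ⟨g, hg⟩ := exists_geodesic hX x (a t)
  obtain ⟨s, hs, hds⟩ := hslim x (a t) ⟨t, ht0, rfl⟩ g hg
  rw [← hL] at hs
  -- s = dist x (g s) ≤ B
  have hxgs : dist x (g s) = s := by
    have h0mem : (0:ℝ) ∈ Icc 0 (dist x (a t)) := ⟨le_rfl, dist_nonneg⟩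
    have := hg.2.2 0 s h0mem (by rwa [← hL])
    rw [hg.1] at this
    rw [this, abs_of_nonpos (by linarith [hs.1]), neg_sub, sub_zero]
  have hsB : s ≤ B := by
    have : dist x (g s) ≤ dist x (π x) + dist (π x) (g s) := dist_triangle _ _ _
    rw [hxgs] at this
    linarith
  -- the ray as a geodesic segment from x to r t
  have hxrt : dist x (r t) = t := by
    rw [← hr0, hr 0 t le_rfl ht0, abs_of_nonpos (by linarith), neg_sub, sub_zero]
  have hseg : IsGeodesicSeg r x (r t) := by
    refine ⟨hr0, by rw [hxrt], ?_⟩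
    intro s' t' hs' ht'
    exact hr s' t' hs'.1 ht'.1
  -- comparison
  set l := s / L with hl
  have hl0 : 0 ≤ l := div_nonneg hs.1 hL0.le
  have hl1 : l ≤ 1 := (div_le_one hL0).mpr hs.2
  have hcomp := comparison hX hg hseg hl0 hl1
  rw [← hL, hxrt] at hcomp
  have hlL : l * L = s := by rw [hl]; field_simp
  rw [hlL] at hcomp
  -- bound the comparison term
  have hra : dist (a t) (r t) ≤ M := by rw [dist_comm]; exact hM t ht0
  have hsmall : l * dist (a t) (r t) ≤ ε := by
    have h1 : l * dist (a t) (r t) ≤ l * M := mul_le_mul_of_nonneg_left hra hl0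
    have hlB : l ≤ B / L := by rw [hl]; gcongr
    have h2 : l * M ≤ (B / L) * M := mul_le_mul_of_nonneg_right hlB hM0
    have hBL : B * M / ε ≤ L := le_trans hmax2 hLlow
    have h4 : (B * M / ε) * ε ≤ L * ε := mul_le_mul_of_nonneg_right hBL hε.le
    have h5 : (B * M / ε) * ε = B * M := by field_simp
    have h3 : (B / L) * M ≤ ε := by
      rw [div_mul_eq_mul_div, div_le_iff₀ hL0]
      linarith
    linarith
  -- conclude
  have hmem : r (l * t) ∈ r '' Ici (0:ℝ) := ⟨l * t, mul_nonneg hl0 ht0, rfl⟩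
  have hID : infDist (π x) (r '' Ici (0:ℝ)) ≤ dist (π x) (r (l * t)) :=
    infDist_le_dist_of_mem hmem
  calc infDist (π x) (r '' Ici (0:ℝ)) ≤ dist (π x) (r (l * t)) := hID
    _ ≤ dist (π x) (g s) + dist (g s) (r (l * t)) := dist_triangle _ _ _
    _ ≤ δ + ε := by linarith [hcomp, hsmall, hds]
end

section
/- Let X be a proper CAT(0) space with basepoint x. A sequence (a_i) of contracting geodesic rays from x converges to a contracting ray b in the contracting boundary ∂_c X if and only if (1) there is a uniform K such that every a_i is K-contracting, and (2) a_i → b in the visual boundary ∂X. -/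
open Metric Set Filter

variable {X : Type*} [MetricSpace X]

/-- The visual boundary of `X`, realized as geodesic rays from basepoint `x`,
with the cone topology (induced from pointwise convergence). -/
abbrev RayFrom (x : X) := {c : ℝ → X // c 0 = x ∧ IsRay c}

/-- The `D`-component of the contracting boundary: `D`-contracting rays from `x`,
as a (closed) subset of the visual boundary. -/
def DComp (x : X) (D : ℝ) : Set (RayFrom x) :=
  {c | ContractingSet D (c.1 '' Ici (0:ℝ))}

/-- The underlying set of the contracting boundary: contracting rays from `x`. -/
abbrev CRay (x : X) := {c : RayFrom x // ∃ A : ℝ, c ∈ DComp x A}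

/-- The direct limit topology on the contracting boundary: the finest topology making
all inclusions of the components `∂_c^D X` continuous. -/
def cTop (x : X) : TopologicalSpace (CRay x) :=
  ⨆ D : ℝ, TopologicalSpace.coinduced
    (fun c : DComp x D => (⟨c.1, ⟨D, c.2⟩⟩ : CRay x)) inferInstance

open Topology
lemma dComp_mono {x : X} {A A' : ℝ} (hle : A ≤ A') {c : RayFrom x}
    (h : c ∈ DComp x A) : c ∈ DComp x A' := by
  obtain ⟨π, hπ, hc⟩ := h
  exact ⟨π, hπ, fun p q hpq => lt_of_lt_of_le (hc p q hpq) hle⟩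

theorem convergence_in_contracting_boundary [ProperSpace X] (hX : IsCAT0 X)
    (x : X) (a : ℕ → CRay x) (b : CRay x) :
    Tendsto a atTop (@nhds _ (cTop x) b) ↔
      ((∃ K : ℝ, ∀ i : ℕ, (a i).1 ∈ DComp x K) ∧
        Tendsto (fun i : ℕ => (a i).1) atTop (nhds b.1)) := by
  obtain ⟨Db, hDb⟩ := b.2
  constructor
  · intro h
    constructor
    · -- uniform contracting constant, by contradiction
      by_contra hK
      push_neg at hK
      -- for every K, the set of bad indices is infinite
      have hinf : ∀ K : ℝ, {i : ℕ | (a i).1 ∉ DComp x K}.Infinite := by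
        intro K
        by_contra hfin
        rw [Set.not_infinite] at hfin
        have hbdd : BddAbove ((fun i => Classical.choose (a i).2) ''
            {i : ℕ | (a i).1 ∉ DComp x K}) := (hfin.image _).bddAbove
        obtain ⟨M, hM⟩ := hbdd
        obtain ⟨j, hj⟩ := hK (max K M)
        by_cases hjK : (a j).1 ∈ DComp x K
        · exact hj (dComp_mono (le_max_left _ _) hjK)
        · have h1 : Classical.choose (a j).2 ≤ M :=
            hM ⟨j, hjK, rfl⟩
          exact hj (dComp_mono (h1.trans (le_max_right _ _))
            (Classical.choose_spec (a j).2))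
      -- choose a subsequence escaping every component
      have hex : ∀ k : ℕ, ∃ m : ℕ, k < m ∧
          (a m).1 ∉ DComp x (max (k : ℝ) (Db + 1)) := by
        intro k
        obtain ⟨m, hm, hlt⟩ := (hinf (max (k : ℝ) (Db + 1))).exists_gt k
        exact ⟨m, hlt, hm⟩
      choose idx hidx1 hidx2 using hex
      set A : Set (CRay x) := Set.range (fun k => a (idx k)) with hA
      have hbA : b ∉ A := by
        rintro ⟨k, hk⟩
        apply hidx2 k
        rw [show a (idx k) = b from hk]
        exact dComp_mono (le_trans (by linarith) (le_max_right (k : ℝ) (Db + 1))) hDb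
      have hopen : IsOpen[cTop x] Aᶜ := by
        rw [cTop, isOpen_iSup_iff]
        intro D
        rw [isOpen_coinduced, Set.preimage_compl, isOpen_compl_iff]
        have heq : (fun c : DComp x D => (⟨c.1, ⟨D, c.2⟩⟩ : CRay x)) ⁻¹' A =
            ⋃ k ∈ Finset.range ⌈D⌉₊, {c : DComp x D | (c : RayFrom x) = (a (idx k)).1} := by
          ext c
          simp only [Set.mem_preimage, Set.mem_iUnion, Finset.mem_range, Set.mem_setOf_eq]
          constructor
          · rintro ⟨k, hk⟩
            have hval : (a (idx k)).1 = (c : RayFrom x) := congrArg Subtype.val hk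
            have hcD : (c : RayFrom x) ∈ DComp x D := c.2
            have hDlt : max (k : ℝ) (Db + 1) < D := by
              by_contra hle
              push_neg at hle
              exact hidx2 k (hval ▸ dComp_mono hle hcD)
            have hkD : (k : ℝ) < D := lt_of_le_of_lt (le_max_left _ _) hDlt
            exact ⟨k, Nat.lt_ceil.mpr hkD, hval.symm⟩
          · rintro ⟨k, _, hk⟩
            exact ⟨k, Subtype.ext hk.symm⟩
        rw [heq]
        apply Set.Finite.isClosed_biUnion (Finset.range ⌈D⌉₊).finite_toSet
        intro k _
        exact (isClosed_singleton (x := (a (idx k)).1)).preimage continuous_subtype_val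
      have hmem : Aᶜ ∈ @nhds _ (cTop x) b := by
        letI : TopologicalSpace (CRay x) := cTop x
        exact hopen.mem_nhds hbA
      obtain ⟨N, hN⟩ := eventually_atTop.mp (h hmem)
      exact hN (idx N) (le_of_lt (hidx1 N)) ⟨N, rfl⟩
    · -- convergence in the visual boundary
      have hcont : Continuous[cTop x, _] (fun c : CRay x => c.1) := by
        rw [cTop, continuous_iSup_dom]
        intro D
        rw [continuous_coinduced_dom]
        exact continuous_subtype_val
      exact ((@Continuous.tendsto _ _ (cTop x) _ _ hcont b).comp h)
  · rintro ⟨⟨K, hK⟩, hconv⟩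
    set D : ℝ := max K Db with hD
    have hbD : b.1 ∈ DComp x D := dComp_mono (le_max_right _ _) hDb
    have haD : ∀ i, (a i).1 ∈ DComp x D := fun i => dComp_mono (le_max_left _ _) (hK i)
    have hι : Continuous[(inferInstance : TopologicalSpace (DComp x D)), cTop x]
        (fun c : DComp x D => (⟨c.1, ⟨D, c.2⟩⟩ : CRay x)) := by
      rw [continuous_iff_coinduced_le, cTop]
      exact le_iSup (fun D : ℝ => TopologicalSpace.coinduced
        (fun c : DComp x D => (⟨c.1, ⟨D, c.2⟩⟩ : CRay x)) inferInstance) D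
    have ht : Tendsto (fun i => (⟨(a i).1, haD i⟩ : DComp x D)) atTop
        (nhds (⟨b.1, hbD⟩ : DComp x D)) := by
      rw [tendsto_subtype_rng]
      exact hconv
    have hcomp := ((@Continuous.tendsto _ _ _ (cTop x) _ hι (⟨b.1, hbD⟩ : DComp x D)).comp ht)
    have h1 : ((fun c : DComp x D => (⟨c.1, ⟨D, c.2⟩⟩ : CRay x)) ∘
        (fun i => (⟨(a i).1, haD i⟩ : DComp x D))) = a :=
      funext fun i => Subtype.ext rfl
    have h2 : (⟨(⟨b.1, hbD⟩ : DComp x D).1, ⟨D, (⟨b.1, hbD⟩ : DComp x D).2⟩⟩ : CRay x) = b :=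
      Subtype.ext rfl
    rwa [h1, h2] at hcomp
end

section
/- Let X be a proper CAT(0) space with a geometric action of a group G such that the contracting boundary ∂_c X is nonempty. Then |∂_c X| ≥ 2. -/
open Metric Set Filter Topology

variable {X : Type*} [MetricSpace X]

lemma cn_line_mid (hX : IsCAT0 X) {d : ℝ → X} (hd : IsGeodesicLine d) (s t : ℝ) (z : X) :
    dist z (d ((s + t) / 2)) ^ 2 ≤ (dist z (d s) ^ 2 + dist z (d t) ^ 2) / 2 - (s - t) ^ 2 / 4 := by
  obtain ⟨m, h1, h2, h3⟩ := hX (d s) (d t)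
  have e1 : dist (d ((s + t) / 2)) (d s) = |(s + t) / 2 - s| := hd _ _
  have e2 : dist (d ((s + t) / 2)) (d t) = |(s + t) / 2 - t| := hd _ _
  have e3 : dist (d s) (d t) = |s - t| := hd _ _
  have h4 := h3 (d ((s + t) / 2))
  rw [e1, e2, e3] at h4
  have h5 : dist (d ((s + t) / 2)) m ^ 2 ≤ 0 := by
    nlinarith [sq_abs ((s + t) / 2 - s), sq_abs ((s + t) / 2 - t), sq_abs (s - t), h4]
  have h6 : d ((s + t) / 2) = m := by
    have := dist_nonneg (x := d ((s + t) / 2)) (y := m)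
    have h7 : dist (d ((s + t) / 2)) m = 0 := by nlinarith
    exact dist_eq_zero.mp h7
  have h8 := h3 z
  rw [← h6, e3] at h8
  nlinarith [sq_abs (s - t), h8]

lemma line_min_mono (hX : IsCAT0 X) {d : ℝ → X} (hd : IsGeodesicLine d) (p : X) (τ : ℝ)
    (hτ : ∀ s, dist p (d τ) ≤ dist p (d s)) :
    ∀ u v, τ ≤ u → u ≤ v → dist p (d u) ≤ dist p (d v) := by
  intro u v huτ huv
  by_contra hlt
  push_neg at hlt
  have hcont : Continuous fun s : ℝ => dist p (d s) := by
    have : LipschitzWith 1 fun s : ℝ => dist p (d s) := by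
      refine LipschitzWith.of_dist_le_mul fun a b => ?_
      rw [NNReal.coe_one, one_mul, Real.dist_eq, Real.dist_eq]
      calc |dist p (d a) - dist p (d b)|
          ≤ dist (d a) (d b) := by
            rw [dist_comm p (d a), dist_comm p (d b)]; exact abs_dist_sub_le _ _ _
        _ = |a - b| := hd _ _
    exact this.continuous
  have hτv : τ ≤ v := le_trans huτ huv
  obtain ⟨w, hwmem, hwmax⟩ :=
    isCompact_Icc.exists_isMaxOn (s := Icc τ v) ⟨τ, left_mem_Icc.2 hτv⟩ hcont.continuousOn
  have hwu : dist p (d u) ≤ dist p (d w) := hwmax ⟨huτ, huv⟩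
  have hwτ : τ < w := by
    rcases eq_or_lt_of_le hwmem.1 with h | h
    · exfalso; have := hτ v; rw [← h] at hwu; linarith
    · exact h
  have hwv : w < v := by
    rcases eq_or_lt_of_le hwmem.2 with h | h
    · exfalso; rw [h] at hwu; linarith
    · exact h
  set η := min (w - τ) (v - w) with hη
  have hηpos : 0 < η := lt_min (by linarith) (by linarith)
  have ha1 : τ ≤ w - η := by have := min_le_left (w - τ) (v - w); simp only [← hη] at this; linarith
  have hb1 : w + η ≤ v := by have := min_le_right (w - τ) (v - w); simp only [← hη] at this; linarith
  have hmid : ((w - η) + (w + η)) / 2 = w := by ring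
  have hcn := cn_line_mid hX hd (w - η) (w + η) p
  rw [hmid] at hcn
  have h2 : dist p (d (w - η)) ≤ dist p (d w) := hwmax ⟨ha1, by linarith⟩
  have h3 : dist p (d (w + η)) ≤ dist p (d w) := hwmax ⟨by linarith, hb1⟩
  have hsq : ((w - η) - (w + η)) ^ 2 = 4 * η ^ 2 := by ring
  nlinarith [dist_nonneg (x := p) (y := d (w - η)), dist_nonneg (x := p) (y := d (w + η)),
    dist_nonneg (x := p) (y := d w)]

lemma chain_exists (hX : IsCAT0 X) (y z : X) (n : ℕ) :
    ∃ x : ℕ → X, x 0 = y ∧ x (2 ^ n) = z ∧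
      ∀ i j : ℕ, i ≤ 2 ^ n → j ≤ 2 ^ n → i ≤ j →
        dist (x i) (x j) = ((j : ℝ) - (i : ℝ)) * dist y z / 2 ^ n := by
  induction n with
  | zero =>
    refine ⟨fun i => if i = 0 then y else z, by simp, by simp, ?_⟩
    intro i j hi hj hij
    interval_cases i <;> interval_cases j <;> simp
  | succ n ih =>
    obtain ⟨x, hx0, hxN, hxd⟩ := ih
    have hm : ∀ k : ℕ, ∃ m : X,
        dist (x k) m = dist (x k) (x (k + 1)) / 2 ∧
        dist (x (k + 1)) m = dist (x k) (x (k + 1)) / 2 := by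
      intro k
      obtain ⟨m, h1, h2, _⟩ := hX (x k) (x (k + 1))
      exact ⟨m, h1, h2⟩
    choose m hm1 hm2 using hm
    set D := dist y z with hD
    have hDnn : 0 ≤ D := dist_nonneg
    set N := 2 ^ n with hN
    set δ : ℝ := D / 2 ^ (n + 1) with hδ
    have h2n : (2:ℝ) ^ (n+1) = 2 ^ n * 2 := by ring
    have hcons : ∀ k, k + 1 ≤ N → dist (x k) (x (k + 1)) = 2 * δ := by
      intro k hk
      rw [hxd k (k + 1) (by omega) hk (by omega)]
      rw [hδ, h2n]
      push_cast
      field_simp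
      ring
    have hm1' : ∀ k, k + 1 ≤ N → dist (x k) (m k) = δ := by
      intro k hk; rw [hm1 k, hcons k hk]; ring
    have hm2' : ∀ k, k + 1 ≤ N → dist (x (k + 1)) (m k) = δ := by
      intro k hk; rw [hm2 k, hcons k hk]; ring
    have hgen : ∀ a b, a ≤ b → b ≤ N → dist (x a) (x b) = ((b:ℝ) - a) * (2 * δ) := by
      intro a b hab hbN
      rw [hxd a b (le_trans hab hbN) hbN hab, hδ, h2n]
      push_cast
      field_simp
    refine ⟨fun i => if i % 2 = 0 then x (i / 2) else m (i / 2), by simp [hx0], ?_, ?_⟩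
    · have e1 : 2 ^ (n + 1) % 2 = 0 := by
        rw [pow_succ]; exact Nat.mul_mod_left _ _
      have e2 : 2 ^ (n + 1) / 2 = N := by
        rw [pow_succ, hN]; exact Nat.mul_div_cancel _ (by norm_num)
      simp [e1, e2, hxN]
    · intro i j hi hj hij
      have hNN : (2:ℕ) ^ (n + 1) = 2 * N := by rw [pow_succ, hN]; ring
      rw [hNN] at hi hj
      have hcast : ∀ i : ℕ, ((i:ℝ)) * D / 2 ^ (n+1) = (i:ℝ) * δ := by
        intro i; rw [hδ]; ring
      obtain ⟨a, ha | ha⟩ := Nat.even_or_odd' i <;> obtain ⟨b, hb | hb⟩ := Nat.even_or_odd' j <;>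
        subst ha hb
      · -- even, even
        have ea : (2 * a) % 2 = 0 := Nat.mul_mod_right _ _
        have eb : (2 * b) % 2 = 0 := Nat.mul_mod_right _ _
        have da : (2 * a) / 2 = a := Nat.mul_div_cancel_left _ (by norm_num)
        have db : (2 * b) / 2 = b := Nat.mul_div_cancel_left _ (by norm_num)
        simp only [ea, eb, da, db, if_true, if_pos]
        rw [hgen a b (by omega) (by omega)]
        rw [hδ]; push_cast; field_simp
      · -- even i = 2a, odd j = 2b+1
        have ea : (2 * a) % 2 = 0 := Nat.mul_mod_right _ _
        have eb : (2 * b + 1) % 2 = 1 := by omega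
        have da : (2 * a) / 2 = a := Nat.mul_div_cancel_left _ (by norm_num)
        have db : (2 * b + 1) / 2 = b := by omega
        simp only [ea, eb, da, db, if_pos, if_neg, one_ne_zero, if_false]
        have hab : a ≤ b := by omega
        have hbN : b + 1 ≤ N := by omega
        have hup : dist (x a) (m b) ≤ ((b:ℝ) - a) * (2*δ) + δ := by
          calc dist (x a) (m b) ≤ dist (x a) (x b) + dist (x b) (m b) := dist_triangle _ _ _
            _ = ((b:ℝ) - a) * (2*δ) + δ := by
                rw [hgen a b hab (by omega), hm1' b hbN]
        have hlo : ((b:ℝ) + 1 - a) * (2*δ) - δ ≤ dist (x a) (m b) := by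
          have := dist_triangle (x a) (m b) (x (b+1))
          rw [dist_comm (m b) (x (b+1)), hm2' b hbN] at this
          rw [hgen a (b+1) (by omega) hbN] at this
          push_cast at this ⊢
          linarith
        have : dist (x a) (m b) = ((b:ℝ) - a) * (2*δ) + δ := le_antisymm hup (by linarith)
        rw [this, hδ]; push_cast; field_simp; ring
      · -- odd i = 2a+1, even j = 2b
        have ea : (2 * a + 1) % 2 = 1 := by omega
        have eb : (2 * b) % 2 = 0 := Nat.mul_mod_right _ _
        have da : (2 * a + 1) / 2 = a := by omega
        have db : (2 * b) / 2 = b := Nat.mul_div_cancel_left _ (by norm_num)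
        simp only [ea, eb, da, db, if_pos, if_neg, one_ne_zero, if_false]
        have hab : a + 1 ≤ b := by omega
        have haN : a + 1 ≤ N := by omega
        have hup : dist (m a) (x b) ≤ ((b:ℝ) - a) * (2*δ) - δ := by
          have h1 := dist_triangle (m a) (x (a+1)) (x b)
          rw [dist_comm (m a) (x (a+1)), hm2' a haN] at h1
          rw [hgen (a+1) b hab (by omega)] at h1
          push_cast at h1 ⊢
          linarith
        have hlo : ((b:ℝ) - a) * (2*δ) - δ ≤ dist (m a) (x b) := by
          have h1 := dist_triangle (x a) (m a) (x b)
          rw [hm1' a haN] at h1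
          rw [hgen a b (by omega) (by omega)] at h1
          linarith
        have : dist (m a) (x b) = ((b:ℝ) - a) * (2*δ) - δ := le_antisymm hup hlo
        rw [this, hδ]; push_cast; field_simp; ring
      · -- odd, odd
        have ea : (2 * a + 1) % 2 = 1 := by omega
        have eb : (2 * b + 1) % 2 = 1 := by omega
        have da : (2 * a + 1) / 2 = a := by omega
        have db : (2 * b + 1) / 2 = b := by omega
        simp only [ea, eb, da, db, if_neg, one_ne_zero, if_false]
        rcases eq_or_lt_of_le (show a ≤ b by omega) with hab | hab
        · subst hab
          simp
        · have haN : a + 1 ≤ N := by omega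
          have hbN : b + 1 ≤ N := by omega
          have hup : dist (m a) (m b) ≤ ((b:ℝ) - a) * (2*δ) := by
            have h1 := dist_triangle4 (m a) (x (a+1)) (x b) (m b)
            rw [dist_comm (m a) (x (a+1)), hm2' a haN, hm1' b hbN] at h1
            rw [hgen (a+1) b (by omega) (by omega)] at h1
            push_cast at h1 ⊢
            linarith
          have hlo : ((b:ℝ) - a) * (2*δ) ≤ dist (m a) (m b) := by
            have h1 := dist_triangle4 (x a) (m a) (m b) (x (b+1))
            rw [hm1' a haN, dist_comm (m b) (x (b+1)), hm2' b hbN] at h1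
            rw [hgen a (b+1) (by omega) hbN] at h1
            push_cast at h1 ⊢
            linarith
          have : dist (m a) (m b) = ((b:ℝ) - a) * (2*δ) := le_antisymm hup hlo
          rw [this, hδ]; push_cast; field_simp; ring

lemma ulim_exists {Y : Type*} [MetricSpace Y] [ProperSpace Y]
    (U : Ultrafilter ℕ) (F : ℕ → Y) (y₀ : Y) (K : ℝ)
    (hb : ∀ᶠ n in (U : Filter ℕ), F n ∈ closedBall y₀ K) :
    ∃ y, Tendsto F (U : Filter ℕ) (𝓝 y) := by
  obtain ⟨y, -, hy⟩ := (isCompact_closedBall y₀ K).ultrafilter_le_nhds (U.map F)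
    (by rw [Ultrafilter.coe_map, le_principal_iff, mem_map]; exact hb)
  exact ⟨y, hy⟩

lemma half_contracting (hX : IsCAT0 X) {d : ℝ → X} (hd : IsGeodesicLine d)
    (A : ℝ) (τ : X → ℝ)
    (hnear : ∀ p s, dist p (d (τ p)) ≤ dist p (d s))
    (hcon : ∀ p q, dist p q < dist p (d (τ p)) → |τ p - τ q| ≤ A) :
    ContractingSet (2 * max A 1 + 1) (d '' Ici (0:ℝ)) := by
  classical
  set Λ := max A 1 with hΛ
  have hΛ1 : (1:ℝ) ≤ Λ := le_max_right A 1
  have hAΛ : A ≤ Λ := le_max_left A 1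
  have hjump : ∀ u v : X, |τ u - τ v| ≤ max A (4 * dist u v) := by
    intro u v
    rcases lt_or_ge (dist u v) (dist u (d (τ u))) with h | h
    · exact le_trans (hcon u v h) (le_max_left _ _)
    · have h1 : dist v (d (τ v)) ≤ dist u v + dist u (d (τ u)) := by
        calc dist v (d (τ v)) ≤ dist v (d (τ u)) := hnear v (τ u)
          _ ≤ dist v u + dist u (d (τ u)) := dist_triangle _ _ _
          _ = dist u v + dist u (d (τ u)) := by rw [dist_comm]
      have h2 : |τ u - τ v| = dist (d (τ u)) (d (τ v)) := (hd _ _).symm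
      rw [h2]
      have h3 : dist (d (τ u)) (d (τ v)) ≤ dist (d (τ u)) u + dist u v + dist v (d (τ v)) :=
        dist_triangle4 _ _ _ _
      rw [dist_comm (d (τ u)) u] at h3
      have : dist (d (τ u)) (d (τ v)) ≤ 4 * dist u v := by linarith
      exact le_trans this (le_max_right _ _)
  refine ⟨fun p => d (max (τ p) 0), ⟨fun p => ⟨⟨max (τ p) 0, Set.mem_Ici.mpr (le_max_right _ _), rfl⟩, ?_⟩, ?_⟩⟩
  · rintro q ⟨s, hs, rfl⟩
    show dist p (d (max (τ p) 0)) ≤ dist p (d s)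
    rcases le_or_gt 0 (τ p) with h | h
    · rw [max_eq_left h]; exact hnear p s
    · rw [max_eq_right h.le]
      exact line_min_mono hX hd p (τ p) (hnear p) 0 s h.le hs
  · intro p q hpq
    change dist p q < dist p (d (max (τ p) 0)) at hpq
    show dist (d (max (τ p) 0)) (d (max (τ q) 0)) < 2 * Λ + 1
    have hdist_eq : dist (d (max (τ p) 0)) (d (max (τ q) 0)) = |max (τ p) 0 - max (τ q) 0| :=
      hd _ _
    rw [hdist_eq]
    have key : |max (τ p) 0 - max (τ q) 0| ≤ 2 * Λ := by
      rcases le_or_gt 0 (τ p) with hp | hp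
      · rw [max_eq_left hp] at hpq
        have h1 := hcon p q hpq
        calc |max (τ p) 0 - max (τ q) 0| ≤ |τ p - τ q| := abs_max_sub_max_le_abs _ _ _
          _ ≤ A := h1
          _ ≤ 2 * Λ := by linarith
      · rcases le_or_gt (τ q) 0 with hq | hq
        · rw [max_eq_right hp.le, max_eq_right hq]
          simp only [sub_self, abs_zero]
          linarith
        · -- main case
          rw [max_eq_right hp.le] at hpq
          set r := dist p q with hr
          set R := dist p (d 0) with hR
          have hrR : r < R := hpq
          have hr0 : 0 ≤ r := dist_nonneg
          have hgoal : τ q ≤ 2 * Λ := by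
            rcases eq_or_lt_of_le hr0 with h0 | hrpos
            · exfalso
              have hpq' : p = q := dist_eq_zero.mp h0.symm
              rw [hpq'] at hp; linarith
            · have hRr : 0 < (R - r) / 4 := by linarith
              obtain ⟨n, hn⟩ : ∃ n : ℕ, r / ((R - r) / 4) < 2 ^ n := by
                obtain ⟨n, hn⟩ := pow_unbounded_of_one_lt (r / ((R - r) / 4)) (one_lt_two (α := ℝ))
                exact ⟨n, hn⟩
              set w : ℝ := 2 ^ n with hw
              have hwpos : (0:ℝ) < w := by positivity
              set δ : ℝ := r / w with hδ
              have hδpos : 0 < δ := div_pos hrpos hwpos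
              have hδlt : 4 * δ < R - r := by
                have h1 : r < w * ((R - r) / 4) := by rw [hw]; exact (div_lt_iff₀ hRr).mp hn
                have h2 : δ < (R - r) / 4 := by
                  rw [hδ, div_lt_iff₀ hwpos, mul_comm]
                  exact h1
                linarith
              obtain ⟨x, hx0, hxN, hxd⟩ := chain_exists hX p q n
              set N := 2 ^ n with hN
              have hNw : ((N:ℕ):ℝ) = w := by rw [hN, hw]; push_cast; ring
              have hpxi : ∀ i : ℕ, i ≤ N → dist p (x i) = i * δ := by
                intro i hi
                have := hxd 0 i (Nat.zero_le _) hi (Nat.zero_le _)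
                rw [hx0] at this
                rw [this, hδ, ← hr]
                push_cast
                field_simp
                rw [hw]; ring
              have hxiq : ∀ i : ℕ, i ≤ N → dist (x i) q = r - i * δ := by
                intro i hi
                have := hxd i N hi le_rfl hi
                rw [hxN] at this
                rw [this, ← hr, hδ, ← hw, hNw]
                field_simp
              have hfindP : ∃ i, i ≤ N ∧ -(4*δ) ≤ τ (x i) :=
                ⟨N, le_rfl, by rw [hxN]; linarith⟩
              set istar := Nat.find hfindP with histar
              obtain ⟨hiN, hiτ⟩ := Nat.find_spec hfindP
              have hτstar : τ (x istar) ≤ Λ := by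
                rcases Nat.eq_zero_or_pos istar with h | h
                · rw [h, hx0]; linarith
                · have hklt : istar - 1 < istar := Nat.pred_lt h.ne'
                  have hk := Nat.find_min hfindP hklt
                  push_neg at hk
                  have hkN : istar - 1 ≤ N := le_trans (Nat.sub_le _ _) hiN
                  have hkτ : τ (x (istar - 1)) < -(4*δ) := hk hkN
                  have hdistk : dist (x (istar - 1)) (x istar) = δ := by
                    have := hxd (istar - 1) istar hkN hiN (Nat.sub_le _ _)
                    rw [this, ← hr, Nat.cast_sub h, hδ, ← hw]
                    push_cast
                    field_simp
                    ring
                  have hj := hjump (x (istar - 1)) (x istar)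
                  rw [hdistk] at hj
                  have hj2 : τ (x istar) - τ (x (istar - 1)) ≤ max A (4 * δ) := by
                    rw [abs_sub_comm] at hj
                    exact le_trans (le_abs_self _) hj
                  rcases le_total A (4*δ) with hc | hc
                  · rw [max_eq_right hc] at hj2; linarith
                  · rw [max_eq_left hc] at hj2; linarith
              set e := dist (x istar) (d (τ (x istar))) with he
              have hclaim2 : R ≤ istar * δ + e + 4 * δ := by
                have hmono : dist p (d 0) ≤ dist p (d (max (τ (x istar)) 0)) :=
                  line_min_mono hX hd p (τ p) (hnear p) 0 (max (τ (x istar)) 0) hp.le (le_max_right _ _)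
                have htri : dist p (d (max (τ (x istar)) 0)) ≤
                    dist p (x istar) + dist (x istar) (d (τ (x istar))) +
                      dist (d (τ (x istar))) (d (max (τ (x istar)) 0)) := dist_triangle4 _ _ _ _
                have hlast : dist (d (τ (x istar))) (d (max (τ (x istar)) 0)) ≤ 4 * δ := by
                  rw [hd]
                  rcases le_total (τ (x istar)) 0 with h | h
                  · rw [max_eq_right h, sub_zero, abs_le]
                    constructor
                    · linarith
                    · linarith
                  · rw [max_eq_left h, sub_self, abs_zero]; linarith
                rw [hpxi istar hiN] at htri
                rw [← he] at htri
                linarith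
              have hclaim4 : dist (x istar) q < e := by
                rw [hxiq istar hiN]
                linarith
              have hfin := hcon (x istar) q hclaim4
              have hfin2 : τ q - τ (x istar) ≤ A := by
                have := neg_le_of_abs_le hfin
                linarith
              linarith
          rw [max_eq_right hp.le, max_eq_left hq.le, zero_sub, abs_neg, abs_of_pos hq]
          exact hgoal
    linarith

theorem at_least_two_points [ProperSpace X] (hX : IsCAT0 X)
    (G : Type*) [Group G] [MulAction G X]
    (hiso : ∀ g : G, Isometry fun p : X => g • p)
    (x₀ : X) (hcc : ∃ C : ℝ, ∀ p : X, ∃ g : G, dist p (g • x₀) ≤ C)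
    (hpd : ∀ p : X, ∀ r : ℝ, {g : G | dist p (g • p) ≤ r}.Finite)
    (hne : ∃ c : ℝ → X, IsRay c ∧ ∃ A : ℝ, ContractingSet A (c '' Ici (0:ℝ))) :
    ∃ a b : ℝ → X, IsRay a ∧ IsRay b ∧
      (∃ A : ℝ, ContractingSet A (a '' Ici (0:ℝ))) ∧
      (∃ B : ℝ, ContractingSet B (b '' Ici (0:ℝ))) ∧ ¬ Asymp a b := by
  classical
  obtain ⟨c, hc, A, π, hπproj, hπcon⟩ := hne
  obtain ⟨C, hC⟩ := hcc
  -- isometry facts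
  have gd : ∀ (gg : G) (a b : X), dist (gg • a) (gg • b) = dist a b :=
    fun gg a b => (hiso gg).dist_eq a b
  have ginv : ∀ (gg : G) (a b : X), dist (gg⁻¹ • a) b = dist a (gg • b) := by
    intro gg a b
    rw [← gd gg (gg⁻¹ • a) b, smul_inv_smul]
  -- group elements tracking the ray
  set g : ℕ → G := fun n => (hC (c n)).choose with hg_def
  have hg : ∀ n : ℕ, dist (c n) (g n • x₀) ≤ C := fun n => (hC (c n)).choose_spec
  have hC0 : 0 ≤ C := le_trans dist_nonneg (hg 0)
  -- ultrafilter
  obtain ⟨U, hU⟩ := Filter.exists_ultrafilter_le (atTop : Filter ℕ)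
  have hUge : ∀ m : ℕ, ∀ᶠ n in (U : Filter ℕ), m ≤ n := fun m => hU (eventually_ge_atTop m)
  have hUge' : ∀ a : ℝ, ∀ᶠ (n : ℕ) in (U : Filter ℕ), 0 ≤ a + (n : ℝ) := by
    intro a
    filter_upwards [hUge ⌈|a|⌉₊] with n hn
    have h1 : |a| ≤ (n : ℝ) := le_trans (Nat.le_ceil _) (by exact_mod_cast hn)
    have h2 : -a ≤ |a| := neg_le_abs a
    linarith
  -- the translated rays
  set D : ℕ → ℝ → X := fun n t => (g n)⁻¹ • c (t + n) with hD_def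
  have hDD : ∀ (n : ℕ) (s t : ℝ), 0 ≤ s + n → 0 ≤ t + n → dist (D n s) (D n t) = |s - t| := by
    intro n s t hs ht
    rw [hD_def]
    simp only
    rw [gd ((g n)⁻¹) _ _, hc _ _ hs ht]
    congr 1
    ring
  have hDp : ∀ (n : ℕ) (t : ℝ) (p : X), dist p (D n t) = dist (g n • p) (c (t + n)) := by
    intro n t p
    rw [hD_def]
    simp only
    rw [dist_comm, ginv, dist_comm]
  have hD0 : ∀ n : ℕ, dist x₀ (D n 0) ≤ C := by
    intro n
    rw [dist_comm, hD_def]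
    simp only
    rw [ginv, zero_add]
    exact hg n
  -- construct the limit line
  have hDbnd : ∀ t : ℝ, ∀ᶠ n in (U : Filter ℕ), D n t ∈ closedBall x₀ (|t| + C) := by
    intro t
    filter_upwards [hUge' t] with n hn
    rw [mem_closedBall, dist_comm]
    calc dist x₀ (D n t) ≤ dist x₀ (D n 0) + dist (D n 0) (D n t) := dist_triangle _ _ _
      _ ≤ C + |t| := by
          have h1 := hDD n 0 t (by positivity) hn
          rw [zero_sub, abs_neg] at h1
          have h2 := hD0 n
          linarith
      _ = |t| + C := by ring
  set dfun : ℝ → X := fun t => (ulim_exists U (fun n => D n t) x₀ (|t| + C) (hDbnd t)).choose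
    with hdfun_def
  have hdlim : ∀ t : ℝ, Tendsto (fun n => D n t) (U : Filter ℕ) (𝓝 (dfun t)) :=
    fun t => (ulim_exists U (fun n => D n t) x₀ (|t| + C) (hDbnd t)).choose_spec
  have hdline : IsGeodesicLine dfun := by
    intro s t
    have h1 : Tendsto (fun n => dist (D n s) (D n t)) (U : Filter ℕ)
        (𝓝 (dist (dfun s) (dfun t))) := (hdlim s).dist (hdlim t)
    have h2 : ∀ᶠ n in (U : Filter ℕ), dist (D n s) (D n t) = |s - t| := by
      filter_upwards [hUge' s, hUge' t] with n h3 h4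
      exact hDD n s t h3 h4
    exact tendsto_nhds_unique ((tendsto_congr' h2).mp h1) tendsto_const_nhds
  -- the projection coordinates
  have hπmem : ∀ v : X, ∃ t : ℝ, 0 ≤ t ∧ c t = π v := by
    intro v
    obtain ⟨t, ht, h⟩ := (hπproj v).1
    exact ⟨t, ht, h⟩
  choose u hu0 hu using hπmem
  set tc : ℕ → X → ℝ := fun n p => u (g n • p) - n with htc_def
  have htcn : ∀ (n : ℕ) (p : X), tc n p + n = u (g n • p) := by
    intro n p; rw [htc_def]; ring
  have hDtc_eq : ∀ (n : ℕ) (p : X), D n (tc n p) = (g n)⁻¹ • π (g n • p) := by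
    intro n p
    rw [hD_def]
    simp only
    rw [htcn, hu]
  have hdisttc : ∀ (n : ℕ) (p : X), dist p (D n (tc n p)) = dist (g n • p) (π (g n • p)) := by
    intro n p
    rw [hDtc_eq, dist_comm, ginv, dist_comm]
  have hnear_n : ∀ (n : ℕ) (p : X) (s : ℝ), 0 ≤ s + n →
      dist p (D n (tc n p)) ≤ dist p (D n s) := by
    intro n p s hs
    rw [hdisttc, hDp]
    exact (hπproj (g n • p)).2 (c (s + n)) ⟨s + n, hs, rfl⟩
  have htc_bdd : ∀ (p : X) (n : ℕ), |tc n p| ≤ 2 * (dist p x₀ + C) := by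
    intro p n
    have h0 : dist p (D n 0) ≤ dist p x₀ + C :=
      le_trans (dist_triangle p x₀ (D n 0)) (by linarith [hD0 n])
    have h1 : dist (D n (tc n p)) (D n 0) = |tc n p| := by
      rw [hDD n (tc n p) 0 (by rw [htcn]; exact hu0 _) (by positivity), sub_zero]
    have h2 : dist p (D n (tc n p)) ≤ dist p (D n 0) := hnear_n n p 0 (by positivity)
    calc |tc n p| = dist (D n (tc n p)) (D n 0) := h1.symm
      _ ≤ dist (D n (tc n p)) p + dist p (D n 0) := dist_triangle _ _ _
      _ = dist p (D n (tc n p)) + dist p (D n 0) := by rw [dist_comm]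
      _ ≤ 2 * (dist p x₀ + C) := by linarith
  have htcball : ∀ p : X, ∀ᶠ n in (U : Filter ℕ),
      tc n p ∈ closedBall (0:ℝ) (2 * (dist p x₀ + C)) := by
    intro p
    refine Filter.Eventually.of_forall fun n => ?_
    rw [mem_closedBall, Real.dist_eq, sub_zero]
    exact htc_bdd p n
  set τfun : X → ℝ := fun p =>
      (ulim_exists U (fun n => tc n p) (0:ℝ) (2 * (dist p x₀ + C)) (htcball p)).choose
    with hτfun_def
  have hτlim : ∀ p : X, Tendsto (fun n => tc n p) (U : Filter ℕ) (𝓝 (τfun p)) :=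
    fun p => (ulim_exists U (fun n => tc n p) (0:ℝ) (2 * (dist p x₀ + C)) (htcball p)).choose_spec
  have hDtc_lim : ∀ p : X, Tendsto (fun n => D n (tc n p)) (U : Filter ℕ) (𝓝 (dfun (τfun p))) := by
    intro p
    rw [tendsto_iff_dist_tendsto_zero]
    have hb : ∀ᶠ n in (U : Filter ℕ), dist (D n (tc n p)) (dfun (τfun p)) ≤
        |tc n p - τfun p| + dist (D n (τfun p)) (dfun (τfun p)) := by
      filter_upwards [hUge' (τfun p)] with n hn
      have h1 : dist (D n (tc n p)) (D n (τfun p)) = |tc n p - τfun p| :=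
        hDD n _ _ (by rw [htcn]; exact hu0 _) hn
      calc dist (D n (tc n p)) (dfun (τfun p))
          ≤ dist (D n (tc n p)) (D n (τfun p)) + dist (D n (τfun p)) (dfun (τfun p)) :=
            dist_triangle _ _ _
        _ = |tc n p - τfun p| + dist (D n (τfun p)) (dfun (τfun p)) := by rw [h1]
    have h2 : Tendsto (fun n => |tc n p - τfun p| + dist (D n (τfun p)) (dfun (τfun p)))
        (U : Filter ℕ) (𝓝 0) := by
      have ha : Tendsto (fun n => |tc n p - τfun p|) (U : Filter ℕ) (𝓝 0) := by
        have := ((hτlim p).sub (tendsto_const_nhds (x := τfun p))).abs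
        simpa using this
      have hb2 : Tendsto (fun n => dist (D n (τfun p)) (dfun (τfun p))) (U : Filter ℕ) (𝓝 0) :=
        tendsto_iff_dist_tendsto_zero.mp (hdlim (τfun p))
      simpa using ha.add hb2
    exact squeeze_zero' (Filter.Eventually.of_forall fun n => dist_nonneg) hb h2
  -- nearest point property
  have hnear : ∀ (p : X) (s : ℝ), dist p (dfun (τfun p)) ≤ dist p (dfun s) := by
    intro p s
    have hL : Tendsto (fun n => dist p (D n (tc n p))) (U : Filter ℕ)
        (𝓝 (dist p (dfun (τfun p)))) := tendsto_const_nhds.dist (hDtc_lim p)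
    have hR : Tendsto (fun n => dist p (D n s)) (U : Filter ℕ) (𝓝 (dist p (dfun s))) :=
      tendsto_const_nhds.dist (hdlim s)
    refine le_of_tendsto_of_tendsto hL hR ?_
    filter_upwards [hUge' s] with n hn
    exact hnear_n n p s hn
  -- contraction property
  have hconτ : ∀ p q : X, dist p q < dist p (dfun (τfun p)) → |τfun p - τfun q| ≤ A := by
    intro p q h
    have hL : Tendsto (fun n => dist p (D n (tc n p))) (U : Filter ℕ)
        (𝓝 (dist p (dfun (τfun p)))) := tendsto_const_nhds.dist (hDtc_lim p)
    have hev : ∀ᶠ n in (U : Filter ℕ), dist p q < dist p (D n (tc n p)) :=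
      hL.eventually (eventually_gt_nhds h)
    have hev2 : ∀ᶠ n in (U : Filter ℕ), |tc n p - tc n q| ≤ A := by
      filter_upwards [hev] with n hn
      rw [hdisttc] at hn
      rw [← gd (g n) p q] at hn
      have h5 := hπcon (g n • p) (g n • q) hn
      rw [← hu (g n • p), ← hu (g n • q), hc _ _ (hu0 _) (hu0 _)] at h5
      have h6 : tc n p - tc n q = u (g n • p) - u (g n • q) := by
        rw [htc_def]; ring
      rw [h6]
      exact le_of_lt h5
    exact le_of_tendsto (((hτlim p).sub (hτlim q)).abs) hev2
  -- assemble
  have H1 := half_contracting hX hdline A τfun hnear hconτ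
  set dneg : ℝ → X := fun t => dfun (-t) with hdneg_def
  have hdnegline : IsGeodesicLine dneg := by
    intro s t
    rw [hdneg_def]
    simp only
    rw [hdline]
    rw [show -s - -t = -(s - t) by ring, abs_neg]
  have hnear' : ∀ (p : X) (s : ℝ), dist p (dneg (-(τfun p))) ≤ dist p (dneg s) := by
    intro p s
    rw [hdneg_def]
    simp only [neg_neg]
    exact hnear p (-s)
  have hcon' : ∀ p q : X, dist p q < dist p (dneg (-(τfun p))) →
      |(-(τfun p)) - (-(τfun q))| ≤ A := by
    intro p q h
    rw [hdneg_def] at h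
    simp only [neg_neg] at h
    rw [show -τfun p - -τfun q = -(τfun p - τfun q) by ring, abs_neg]
    exact hconτ p q h
  have H2 := half_contracting hX hdnegline A (fun p => -(τfun p)) hnear' hcon'
  refine ⟨dfun, dneg, ?_, ?_, ⟨_, H1⟩, ⟨_, H2⟩, ?_⟩
  · intro s t _ _
    exact hdline s t
  · intro s t _ _
    exact hdnegline s t
  · rintro ⟨M, hM⟩
    have h := hM (max M 0 + 1) (by linarith [le_max_right M 0])
    rw [hdneg_def] at h
    simp only at h
    rw [hdline] at h
    have h2 : |max M 0 + 1 - -(max M 0 + 1)| = 2 * max M 0 + 2 := by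
      rw [abs_of_pos (by linarith [le_max_right M 0] : (0:ℝ) < max M 0 + 1 - -(max M 0 + 1))]
      ring
    rw [h2] at h
    linarith [le_max_left M 0, le_max_right M 0]
end
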